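/- arXiv:2603.12376 — 10 statements merged into one kernel-verified Lean document; each statement's English description precedes it below -/
import Mathlib

section
/- Let g, ζ ∈ ℝ^n and 0 ≤ α ≤ 1 with ‖ζ‖ ≤ α‖g‖. Then ⟪g + ζ, g⟫ ≥ √(1 − α²)·‖g + ζ‖·‖g‖ ≥ √(1 − α²)·(1 − α)·‖g‖². -/
/-!
The angle between `g` and `g + ζ` is at most `arcsin α`, since `ζ` lies in the ball of radius
`α‖g‖` around `0`. Squared, the cosine bound becomes a polynomial inequality in
`‖g‖, ‖ζ‖, ⟪ζ, g⟫`, which is a sum of two nonnegative terms. The second inequality is the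
reverse triangle inequality `‖g + ζ‖ ≥ ‖g‖ - ‖ζ‖ ≥ (1 - α)‖g‖`.
-/

open scoped InnerProductSpace

theorem one_sub_mul_norm_le_norm_add {E : Type*} [SeminormedAddCommGroup E] {g ζ : E} {α : ℝ}
    (hζ : ‖ζ‖ ≤ α * ‖g‖) : (1 - α) * ‖g‖ ≤ ‖g + ζ‖ := by
  have := norm_sub_norm_le g (-ζ)
  rw [norm_neg, sub_neg_eq_add] at this
  linarith

section InnerProduct

variable {E : Type*} [NormedAddCommGroup E] [InnerProductSpace ℝ E]

theorem real_inner_add_left_self_nonneg {g ζ : E} (hζ : ‖ζ‖ ≤ ‖g‖) : 0 ≤ ⟪g + ζ, g⟫_ℝ := by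
  rw [inner_add_left, real_inner_self_eq_norm_sq]
  nlinarith [neg_abs_le ⟪ζ, g⟫_ℝ, abs_real_inner_le_norm ζ g, norm_nonneg g]

theorem one_sub_sq_mul_norm_add_sq_mul_norm_sq_le_real_inner_sq {g ζ : E} {α : ℝ}
    (hα : α ^ 2 ≤ 1) (hζ : ‖ζ‖ ≤ α * ‖g‖) :
    (1 - α ^ 2) * ‖g + ζ‖ ^ 2 * ‖g‖ ^ 2 ≤ ⟪g + ζ, g⟫_ℝ ^ 2 := by
  rw [inner_add_left, real_inner_self_eq_norm_sq, norm_add_sq_real, real_inner_comm]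
  have hζsq : ‖ζ‖ ^ 2 ≤ α ^ 2 * ‖g‖ ^ 2 := by
    rw [← mul_pow]
    exact pow_le_pow_left₀ (norm_nonneg ζ) hζ 2
  -- The difference of the two sides is
  -- `(⟪ζ, g⟫ + α²‖g‖²)² + (1 - α²)‖g‖²(α²‖g‖² - ‖ζ‖²)`.
  nlinarith [sq_nonneg (⟪ζ, g⟫_ℝ + α ^ 2 * ‖g‖ ^ 2),
    mul_nonneg (mul_nonneg (sub_nonneg.2 hα) (sq_nonneg ‖g‖)) (sub_nonneg.2 hζsq)]

theorem sqrt_one_sub_sq_mul_norm_add_mul_norm_le_real_inner {g ζ : E} {α : ℝ}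
    (hα0 : 0 ≤ α) (hα1 : α ≤ 1) (hζ : ‖ζ‖ ≤ α * ‖g‖) :
    √(1 - α ^ 2) * ‖g + ζ‖ * ‖g‖ ≤ ⟪g + ζ, g⟫_ℝ := by
  have hα : α ^ 2 ≤ 1 := pow_le_one₀ hα0 hα1
  have hinner : 0 ≤ ⟪g + ζ, g⟫_ℝ :=
    real_inner_add_left_self_nonneg (hζ.trans (mul_le_of_le_one_left (norm_nonneg g) hα1))
  refine (pow_le_pow_iff_left₀ (by positivity) hinner two_ne_zero).1 ?_
  rw [mul_pow, mul_pow, Real.sq_sqrt (sub_nonneg.2 hα)]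
  exact one_sub_sq_mul_norm_add_sq_mul_norm_sq_le_real_inner_sq hα hζ

end InnerProduct

/-- Lower bound on the inner product between a gradient and its relative perturbation. -/
theorem cos_lower_bound {n : ℕ} (g ζ : EuclideanSpace ℝ (Fin n)) (α : ℝ)
    (hα0 : 0 ≤ α) (hα1 : α ≤ 1) (hζ : ‖ζ‖ ≤ α * ‖g‖) :
    Real.sqrt (1 - α ^ 2) * ‖g + ζ‖ * ‖g‖ ≤ ⟪g + ζ, g⟫_ℝ ∧
    Real.sqrt (1 - α ^ 2) * (1 - α) * ‖g‖ ^ 2 ≤ Real.sqrt (1 - α ^ 2) * ‖g + ζ‖ * ‖g‖ := by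
  refine ⟨sqrt_one_sub_sq_mul_norm_add_mul_norm_le_real_inner hα0 hα1 hζ, ?_⟩
  have hnorm := one_sub_mul_norm_le_norm_add hζ
  calc √(1 - α ^ 2) * (1 - α) * ‖g‖ ^ 2 = √(1 - α ^ 2) * ((1 - α) * ‖g‖) * ‖g‖ := by ring
    _ ≤ √(1 - α ^ 2) * ‖g + ζ‖ * ‖g‖ := by gcongr
end

section
/- Let f : ℝ^n → ℝ be differentiable with gradient ∇f and L-smooth with L > 0, let 0 ≤ α < 1, δ ≥ 0, and let g̃ satisfy the composite noise condition with parameters α, δ. Set h = ((1−α)/(1+α))^{3/2}/(4L) and x' = x − h·g̃(x). Then f(x') ≤ f(x) − ((1−α)³/(1+α))·(1/(16L))·‖∇f(x)‖² + (3/(16L))·(1/(1+α)²)·δ². -/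
/-!
Smoothness bounds `f (x - h • g x)` by `f x - h ⟪∇f x, g x⟫ + (L/2) h² ‖g x‖²`. The noise condition
gives `⟪∇f x, g x⟫ ≥ (1 - α)‖∇f x‖² - δ‖∇f x‖` and `‖g x‖ ≤ (1 + α)‖∇f x‖ + δ`; Young's inequality
separates `‖∇f x‖` from `δ` in both. Writing the step as `h = t³/(4L)` with
`t = √((1 - α)/(1 + α))`, what remains are two coefficient comparisons, which reduce to
`t (1 + α) = √(1 - α²) ≤ 1` and `t ≤ 1`.
-/

open scoped InnerProductSpace

section InexactGradient

variable {E : Type*} [NormedAddCommGroup E] {u v : E} {α δ : ℝ}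

theorem norm_le_of_norm_sub_le (hv : ‖v - u‖ ≤ α * ‖u‖ + δ) :
    ‖v‖ ≤ (1 + α) * ‖u‖ + δ := by
  have := norm_le_insert' v u
  linarith

variable [InnerProductSpace ℝ E]

theorem apply_sub_smul_le_of_smooth {f : E → ℝ} {x : E} {L h : ℝ}
    (hsmooth : ∀ y, f y ≤ f x + ⟪u, y - x⟫_ℝ + L / 2 * ‖y - x‖ ^ 2) :
    f (x - h • v) ≤ f x - h * ⟪u, v⟫_ℝ + L / 2 * h ^ 2 * ‖v‖ ^ 2 := by
  have hsub : x - h • v - x = -(h • v) := by abel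
  have := hsmooth (x - h • v)
  rwa [hsub, inner_neg_right, real_inner_smul_right, norm_neg, norm_smul, mul_pow,
    Real.norm_eq_abs, sq_abs, ← sub_eq_add_neg, ← mul_assoc] at this

theorem inner_ge_of_norm_sub_le (hv : ‖v - u‖ ≤ α * ‖u‖ + δ) :
    (1 - α) * ‖u‖ ^ 2 - δ * ‖u‖ ≤ ⟪u, v⟫_ℝ := by
  have hsplit : ⟪u, v⟫_ℝ = ‖u‖ ^ 2 + ⟪u, v - u⟫_ℝ := by
    rw [inner_sub_right, real_inner_self_eq_norm_sq]; ring
  have hcs : -(‖u‖ * ‖v - u‖) ≤ ⟪u, v - u⟫_ℝ := (abs_le.1 (abs_real_inner_le_norm u (v - u))).1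
  linarith [mul_le_mul_of_nonneg_left hv (norm_nonneg u)]

theorem apply_sub_smul_le_of_norm_sub_le {f : E → ℝ} {x : E} {L h : ℝ} (hL : 0 ≤ L)
    (hh : 0 ≤ h) (hα : α < 1)
    (hsmooth : ∀ y, f y ≤ f x + ⟪u, y - x⟫_ℝ + L / 2 * ‖y - x‖ ^ 2)
    (hv : ‖v - u‖ ≤ α * ‖u‖ + δ) :
    f (x - h • v) ≤ f x - h * ((1 - α) / 2 * ‖u‖ ^ 2 - δ ^ 2 / (2 * (1 - α)))
      + L * h ^ 2 * ((1 + α) ^ 2 * ‖u‖ ^ 2 + δ ^ 2) := by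
  have ha : 0 < 1 - α := by linarith
  have hinner : (1 - α) / 2 * ‖u‖ ^ 2 - δ ^ 2 / (2 * (1 - α)) ≤ ⟪u, v⟫_ℝ := by
    have hyoung : δ * ‖u‖ ≤ (1 - α) / 2 * ‖u‖ ^ 2 + δ ^ 2 / (2 * (1 - α)) := by
      have hsq : 0 ≤ ((1 - α) * ‖u‖ - δ) ^ 2 / (2 * (1 - α)) := by positivity
      have hexp : ((1 - α) * ‖u‖ - δ) ^ 2 / (2 * (1 - α))
          = (1 - α) / 2 * ‖u‖ ^ 2 + δ ^ 2 / (2 * (1 - α)) - δ * ‖u‖ := by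
        field_simp; ring
      linarith
    linarith [inner_ge_of_norm_sub_le hv]
  have hnorm : ‖v‖ ^ 2 ≤ 2 * ((1 + α) ^ 2 * ‖u‖ ^ 2 + δ ^ 2) := by
    have := pow_le_pow_left₀ (norm_nonneg v) (norm_le_of_norm_sub_le hv) 2
    nlinarith [sq_nonneg ((1 + α) * ‖u‖ - δ)]
  calc f (x - h • v) ≤ f x - h * ⟪u, v⟫_ℝ + L / 2 * h ^ 2 * ‖v‖ ^ 2 :=
        apply_sub_smul_le_of_smooth hsmooth
    _ ≤ _ := by
      linarith [mul_le_mul_of_nonneg_left hinner hh,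
        mul_le_mul_of_nonneg_left hnorm (by positivity : 0 ≤ L / 2 * h ^ 2)]

end InexactGradient

theorem rpow_three_halves_eq_sqrt_pow {r : ℝ} (hr : 0 ≤ r) : r ^ ((3 : ℝ) / 2) = √r ^ 3 := by
  rw [Real.sqrt_eq_rpow, ← Real.rpow_mul_natCast hr]
  norm_num

theorem step_coefficients_le {L t a b N δ : ℝ} (hL : 0 < L) (hb : 0 < b) (ht0 : 0 < t)
    (ht1 : t ≤ 1) (htb : t * b ≤ 1) (ha : t ^ 2 * b = a) :
    -(t ^ 3 / (4 * L) * (a / 2 * N ^ 2 - δ ^ 2 / (2 * a)))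
      + L * (t ^ 3 / (4 * L)) ^ 2 * (b ^ 2 * N ^ 2 + δ ^ 2)
      ≤ -(a ^ 3 / b) * (1 / (16 * L)) * N ^ 2 + 3 / (16 * L) * (1 / b ^ 2) * δ ^ 2 := by
  subst ha
  have hgap : 0 ≤ 3 - 2 * (t * b) - t ^ 4 * (t * b) ^ 2 := by
    have : t ^ 4 * (t * b) ^ 2 ≤ 1 :=
      mul_le_one₀ (pow_le_one₀ ht0.le ht1) (sq_nonneg _) (pow_le_one₀ (by positivity) htb)
    linarith
  rw [← sub_nonneg]
  have hdiff : -((t ^ 2 * b) ^ 3 / b) * (1 / (16 * L)) * N ^ 2 + 3 / (16 * L) * (1 / b ^ 2) * δ ^ 2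
      - (-(t ^ 3 / (4 * L) * (t ^ 2 * b / 2 * N ^ 2 - δ ^ 2 / (2 * (t ^ 2 * b))))
        + L * (t ^ 3 / (4 * L)) ^ 2 * (b ^ 2 * N ^ 2 + δ ^ 2))
      = N ^ 2 * (t ^ 5 * b * (1 - t * b) / (8 * L))
        + δ ^ 2 * ((3 - 2 * (t * b) - t ^ 4 * (t * b) ^ 2) / (16 * L * b ^ 2)) := by
    field_simp; ring
  rw [hdiff]
  have htb' : 0 ≤ 1 - t * b := by linarith
  positivity

theorem gd_step_decrease_general {n : ℕ} (f : EuclideanSpace ℝ (Fin n) → ℝ)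
    (f' g : EuclideanSpace ℝ (Fin n) → EuclideanSpace ℝ (Fin n))
    (L : ℝ) (hL : 0 < L)
    (hsmooth : ∀ x y : EuclideanSpace ℝ (Fin n),
      f y ≤ f x + ⟪f' x, y - x⟫_ℝ + L / 2 * ‖y - x‖ ^ 2)
    (α δ : ℝ) (hα0 : 0 ≤ α) (hα1 : α < 1)
    (hnoise : ∀ x, ‖g x - f' x‖ ≤ α * ‖f' x‖ + δ)
    (h : ℝ) (hh : h = ((1 - α) / (1 + α)) ^ ((3 : ℝ) / 2) / (4 * L))
    (x x' : EuclideanSpace ℝ (Fin n)) (hx' : x' = x - h • g x) :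
    f x' ≤ f x - ((1 - α) ^ 3 / (1 + α)) * (1 / (16 * L)) * ‖f' x‖ ^ 2
      + (3 / (16 * L)) * (1 / (1 + α) ^ 2) * δ ^ 2 := by
  have hb : 0 < 1 + α := by linarith
  have hr : 0 ≤ (1 - α) / (1 + α) := div_nonneg (by linarith) hb.le
  rw [rpow_three_halves_eq_sqrt_pow hr] at hh
  set t := √((1 - α) / (1 + α))
  have ht0 : 0 < t := Real.sqrt_pos.2 (div_pos (by linarith) hb)
  have ht1 : t ≤ 1 := Real.sqrt_le_one.2 ((div_le_one hb).2 (by linarith))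
  have hta : t ^ 2 * (1 + α) = 1 - α := by rw [Real.sq_sqrt hr, div_mul_cancel₀ _ hb.ne']
  have htb : t * (1 + α) ≤ 1 := by
    have hsq : (t * (1 + α)) ^ 2 = 1 - α ^ 2 := by linear_combination (1 + α) * hta
    exact (pow_le_one_iff_of_nonneg (by positivity) two_ne_zero).1 (by linarith [sq_nonneg α])
  subst hx' hh
  calc f (x - (t ^ 3 / (4 * L)) • g x)
      ≤ f x - t ^ 3 / (4 * L) * ((1 - α) / 2 * ‖f' x‖ ^ 2 - δ ^ 2 / (2 * (1 - α)))
        + L * (t ^ 3 / (4 * L)) ^ 2 * ((1 + α) ^ 2 * ‖f' x‖ ^ 2 + δ ^ 2) :=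
      apply_sub_smul_le_of_norm_sub_le hL.le (by positivity) hα1 (hsmooth x) (hnoise x)
    _ ≤ _ := by linarith [step_coefficients_le (N := ‖f' x‖) (δ := δ) hL hb ht0 ht1 htb hta]

/-- One gradient-descent step with composite noise decreases the function value. -/
theorem gd_step_decrease {n : ℕ} (f : EuclideanSpace ℝ (Fin n) → ℝ)
    (f' g : EuclideanSpace ℝ (Fin n) → EuclideanSpace ℝ (Fin n))
    (hgrad : ∀ x, HasGradientAt f (f' x) x)
    (L : ℝ) (hL : 0 < L)
    (hsmooth : ∀ x y : EuclideanSpace ℝ (Fin n),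
      f y ≤ f x + ⟪f' x, y - x⟫_ℝ + L / 2 * ‖y - x‖ ^ 2)
    (α δ : ℝ) (hα0 : 0 ≤ α) (hα1 : α < 1) (hδ : 0 ≤ δ)
    (hnoise : ∀ x, ‖g x - f' x‖ ≤ α * ‖f' x‖ + δ)
    (h : ℝ) (hh : h = ((1 - α) / (1 + α)) ^ ((3 : ℝ) / 2) / (4 * L))
    (x x' : EuclideanSpace ℝ (Fin n)) (hx' : x' = x - h • g x) :
    f x' ≤ f x - ((1 - α) ^ 3 / (1 + α)) * (1 / (16 * L)) * ‖f' x‖ ^ 2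
      + (3 / (16 * L)) * (1 / (1 + α) ^ 2) * δ ^ 2 :=
  gd_step_decrease_general f f' g L hL hsmooth α δ hα0 hα1 hnoise h hh x x' hx'
end

section
/- Let f : ℝ^n → ℝ be differentiable with gradient ∇f, L-smooth with L > 0, and bounded below with infimum f*; let 0 ≤ α < 1, δ ≥ 0, and let g̃ satisfy the composite noise condition with parameters α, δ. Define the gradient descent iterates x^{k+1} = x^k − h·g̃(x^k) with step size h = ((1−α)/(1+α))^{3/2}/(4L). Then for every N ≥ 0: min_{0 ≤ k ≤ N} ‖∇f(x^k)‖² ≤ ((1+α)/(1−α)³)·16L·(f(x⁰) − f*)/(N+1) + (3/((1−α)³(1+α)))·δ². -/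
open scoped InnerProductSpace

lemma gd_aux (a b s G d : ℝ) (hb1 : 1 ≤ b) (ha : 0 < a) (ha1 : a ≤ 1)
    (hs2 : s^2*b^3 = a^3) (hsb : a^2 ≤ s*b) (hd : 0 ≤ d) :
    2*a^3*b^2*G^2 ≤ 8*s*a*b^3*G^2 - 8*s*b^3*G*d - s^2*b^3*(b*G+d)^2 + 6*b*d^2 := by
  have hb : (0:ℝ) < b := lt_of_lt_of_le one_pos hb1
  have ha3 : a^3 ≤ 1 := pow_le_one₀ ha.le ha1
  have he : s^2*b^3*(b*G+d)^2 = a^3*b^2*G^2 + 2*a^3*b*G*d + a^3*d^2 := by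
    linear_combination (b*G+d)^2 * hs2
  have he2 : 4*(s^2*b^4)*(b*G^2) = 4*a^3*b^2*G^2 := by linear_combination 4*b^2*G^2 * hs2
  have h8 : 8*s*b^3*G*d ≤ 4*a^3*b^2*G^2 + 4*b*d^2 := by
    nlinarith [mul_nonneg (by positivity : (0:ℝ) ≤ 4*b) (sq_nonneg (s*b^2*G - d)), he2]
  have h2 : 2*a^3*b*G*d ≤ a^3*b*G^2 + a^3*b*d^2 := by
    nlinarith [mul_nonneg (mul_nonneg (pow_nonneg ha.le 3) hb.le) (sq_nonneg (G - d))]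
  have hmain : a^3*b^2*G^2 ≤ s*a*b^3*G^2 := by
    nlinarith [mul_nonneg (mul_nonneg (mul_nonneg ha.le (pow_nonneg hb.le 2)) (sq_nonneg G)) (sub_nonneg.mpr hsb)]
  have hA : a^3*b*d^2 ≤ b*d^2 := by
    nlinarith [mul_nonneg (mul_nonneg hb.le (sq_nonneg d)) (sub_nonneg.mpr ha3)]
  have hB : a^3*d^2 ≤ b*d^2 := by
    nlinarith [mul_nonneg (sq_nonneg d) (sub_nonneg.mpr ha3),
      mul_nonneg (sq_nonneg d) (sub_nonneg.mpr hb1)]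
  have hC : a^3*b*G^2 ≤ a^3*b^2*G^2 := by
    nlinarith [mul_nonneg (mul_nonneg (mul_nonneg (pow_nonneg ha.le 3) hb.le) (sq_nonneg G)) (sub_nonneg.mpr hb1)]
  linarith

set_option maxHeartbeats 1000000 in
/-- Convergence of the minimal gradient norm for gradient descent with composite noise
on a smooth function. -/
theorem gd_grad_norm_convergence {n : ℕ} (f : EuclideanSpace ℝ (Fin n) → ℝ)
    (f' g : EuclideanSpace ℝ (Fin n) → EuclideanSpace ℝ (Fin n))
    (hgrad : ∀ x, HasGradientAt f (f' x) x)
    (L : ℝ) (hL : 0 < L)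
    (hsmooth : ∀ x y : EuclideanSpace ℝ (Fin n),
      f y ≤ f x + ⟪f' x, y - x⟫_ℝ + L / 2 * ‖y - x‖ ^ 2)
    (fstar : ℝ) (hfstar : IsGLB (Set.range f) fstar)
    (α δ : ℝ) (hα0 : 0 ≤ α) (hα1 : α < 1) (hδ : 0 ≤ δ)
    (hnoise : ∀ x, ‖g x - f' x‖ ≤ α * ‖f' x‖ + δ)
    (h : ℝ) (hh : h = ((1 - α) / (1 + α)) ^ ((3 : ℝ) / 2) / (4 * L))
    (x : ℕ → EuclideanSpace ℝ (Fin n))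
    (hrec : ∀ k : ℕ, x (k + 1) = x k - h • g (x k)) :
    ∀ N : ℕ,
      (Finset.range (N + 1)).inf' (Finset.nonempty_range_iff.mpr (Nat.succ_ne_zero N))
          (fun k => ‖f' (x k)‖ ^ 2) ≤
        ((1 + α) / (1 - α) ^ 3) * (16 * L * (f (x 0) - fstar)) / ((N : ℝ) + 1)
          + (3 / ((1 - α) ^ 3 * (1 + α))) * δ ^ 2 := by
  set a : ℝ := 1 - α with ha_def
  set b : ℝ := 1 + α with hb_def
  set s : ℝ := (a / b) ^ ((3 : ℝ) / 2) with hs_def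
  have ha : 0 < a := by simp [ha_def]; linarith
  have ha1 : a ≤ 1 := by simp [ha_def]; linarith
  have hb1 : (1:ℝ) ≤ b := by simp [hb_def]; linarith
  have hb : (0:ℝ) < b := lt_of_lt_of_le one_pos hb1
  have hab : a * b ≤ 1 := by nlinarith
  have hr : (0:ℝ) < a / b := by positivity
  have hs : 0 < s := Real.rpow_pos_of_pos hr _
  have hs2' : s ^ 2 = (a / b) ^ (3:ℕ) := by
    rw [hs_def, ← Real.rpow_natCast ((a/b) ^ ((3:ℝ)/2)) 2, ← Real.rpow_mul hr.le,
      ← Real.rpow_natCast (a/b) 3]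
    norm_num
  have hs2 : s ^ 2 * b ^ 3 = a ^ 3 := by
    rw [hs2', div_pow, div_mul_cancel₀]
    positivity
  have hsb : a ^ 2 ≤ s * b := by
    have hsq : (a^2)^2 ≤ (s*b)^2 := by nlinarith [pow_pos ha 3]
    nlinarith [mul_pos hs hb, sq_nonneg a]
  clear_value a b s
  have hh0 : 0 < h := by rw [hh]; positivity
  -- per-step decrease
  have hstep : ∀ k : ℕ, f (x (k+1)) + a^3/(16*L*b) * ‖f' (x k)‖^2
      ≤ f (x k) + 3/(16*L*b^2) * δ^2 := by
    intro k
    set G := ‖f' (x k)‖ with hG_def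
    have hG0 : 0 ≤ G := norm_nonneg _
    have hdiff : x (k+1) - x k = -(h • g (x k)) := by rw [hrec k]; abel
    have hsm := hsmooth (x k) (x (k+1))
    rw [hdiff] at hsm
    have hin : ⟪f' (x k), -(h • g (x k))⟫_ℝ = -(h * ⟪f' (x k), g (x k)⟫_ℝ) := by
      rw [inner_neg_right, real_inner_smul_right]
    have hnr : ‖-(h • g (x k))‖^2 = h^2 * ‖g (x k)‖^2 := by
      rw [norm_neg, norm_smul, Real.norm_eq_abs, abs_of_nonneg hh0.le, mul_pow]
    rw [hin, hnr] at hsm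
    -- lower bound on inner product
    have hcs := abs_real_inner_le_norm (f' (x k)) (g (x k) - f' (x k))
    have hip : ⟪f' (x k), g (x k)⟫_ℝ ≥ a * G^2 - G * δ := by
      have hexp : ⟪f' (x k), g (x k)⟫_ℝ
          = G^2 + ⟪f' (x k), g (x k) - f' (x k)⟫_ℝ := by
        rw [inner_sub_right, real_inner_self_eq_norm_sq]; ring
      have hlow : -(G * (α * G + δ)) ≤ ⟪f' (x k), g (x k) - f' (x k)⟫_ℝ := by
        have h1 : ‖f' (x k)‖ * ‖g (x k) - f' (x k)‖ ≤ G * (α * G + δ) := by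
          apply mul_le_mul_of_nonneg_left (hnoise (x k)) hG0
        have := neg_abs_le (⟪f' (x k), g (x k) - f' (x k)⟫_ℝ)
        linarith
      rw [hexp, ha_def]; nlinarith
    -- upper bound on ‖g‖²
    have hng : ‖g (x k)‖^2 ≤ (b*G + δ)^2 := by
      have h1 : ‖g (x k)‖ ≤ b * G + δ := by
        have := norm_sub_norm_le (g (x k)) (f' (x k))
        have := hnoise (x k)
        rw [hb_def]; nlinarith
      exact pow_le_pow_left₀ (norm_nonneg _) h1 2
    -- combine into a bound on f (x (k+1))
    have hS : f (x (k+1)) ≤ f (x k) - h * (a * G^2 - G * δ) + L/2 * (h^2 * (b*G+δ)^2) := by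
      have h1 : -(h * ⟪f' (x k), g (x k)⟫_ℝ) ≤ -(h * (a * G^2 - G * δ)) := by
        have := mul_le_mul_of_nonneg_left hip hh0.le
        linarith
      have h2 : L/2 * (h^2 * ‖g (x k)‖^2) ≤ L/2 * (h^2 * (b*G+δ)^2) := by
        apply mul_le_mul_of_nonneg_left _ (by positivity)
        exact mul_le_mul_of_nonneg_left hng (by positivity)
      linarith
    -- arithmetic with the step size
    have h32 : (0:ℝ) < 32*L*b^3 := by positivity
    have key := gd_aux a b s G δ hb1 ha ha1 hs2 hsb hδ
    have T : a^3/(16*L*b)*G^2 - 3/(16*L*b^2)*δ^2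
        ≤ h * (a * G^2 - G * δ) - L/2 * (h^2 * (b*G+δ)^2) := by
      rw [hh]
      apply le_of_mul_le_mul_left _ h32
      have e1 : 32*L*b^3 * (a^3/(16*L*b)*G^2 - 3/(16*L*b^2)*δ^2)
          = 2*a^3*b^2*G^2 - 6*b*δ^2 := by field_simp; ring
      have e2 : 32*L*b^3 * (s/(4*L) * (a * G^2 - G * δ)
            - L/2 * ((s/(4*L))^2 * (b*G+δ)^2))
          = 8*s*a*b^3*G^2 - 8*s*b^3*G*δ - s^2*b^3*(b*G+δ)^2 := by field_simp; ring
      rw [e1, e2]; linarith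
    linarith
  -- telescoping sum
  have hsum : ∀ N : ℕ, f (x (N+1)) + a^3/(16*L*b) *
      (∑ k ∈ Finset.range (N+1), ‖f' (x k)‖^2)
      ≤ f (x 0) + ((N:ℝ)+1) * (3/(16*L*b^2) * δ^2) := by
    intro N
    induction N with
    | zero => simpa using hstep 0
    | succ N ih =>
        have := hstep (N+1)
        rw [Finset.sum_range_succ]
        push_cast
        push_cast at ih
        nlinarith [this, ih]
  intro N
  set m := (Finset.range (N + 1)).inf' (Finset.nonempty_range_iff.mpr (Nat.succ_ne_zero N))
      (fun k => ‖f' (x k)‖ ^ 2) with hm_def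
  have hmle : ((N:ℝ)+1) * m ≤ ∑ k ∈ Finset.range (N+1), ‖f' (x k)‖^2 := by
    have : ∑ k ∈ Finset.range (N+1), m ≤ ∑ k ∈ Finset.range (N+1), ‖f' (x k)‖^2 :=
      Finset.sum_le_sum fun k hk => Finset.inf'_le _ hk
    simpa [Finset.sum_const, Finset.card_range, mul_comm, add_comm] using this
  have hfs : fstar ≤ f (x (N+1)) := hfstar.1 ⟨x (N+1), rfl⟩
  have hc0 : (0:ℝ) < a^3/(16*L*b) := by positivity
  have hkey : ((N:ℝ)+1) * (a^3/(16*L*b)) * m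
      ≤ (f (x 0) - fstar) + ((N:ℝ)+1) * (3/(16*L*b^2) * δ^2) := by
    have h1 := mul_le_mul_of_nonneg_left hmle hc0.le
    have h2 := hsum N
    nlinarith
  have hNpos : (0:ℝ) < (N:ℝ)+1 := by positivity
  have hpos : (0:ℝ) < ((N:ℝ)+1) * (a^3/(16*L*b)) := by positivity
  apply le_of_mul_le_mul_left _ hpos
  have e3 : ((N:ℝ)+1) * (a^3/(16*L*b)) *
      ((b / a ^ 3) * (16 * L * (f (x 0) - fstar)) / ((N : ℝ) + 1)
        + (3 / (a ^ 3 * b)) * δ ^ 2)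
      = (f (x 0) - fstar) + ((N:ℝ)+1) * (3/(16*L*b^2) * δ^2) := by
    field_simp
  rw [e3]
  calc ((N:ℝ)+1) * (a^3/(16*L*b)) * m
      ≤ (f (x 0) - fstar) + ((N:ℝ)+1) * (3/(16*L*b^2) * δ^2) := hkey
end

section
/- Let f : ℝ^n → ℝ be differentiable with gradient ∇f, L-smooth with L > 0, and satisfying the Polyak–Łojasiewicz condition with parameter μ > 0 relative to its infimum f*; let 0 ≤ α < 1, δ ≥ 0, and let g̃ satisfy the composite noise condition with parameters α, δ. Define the gradient descent iterates x^{k+1} = x^k − h·g̃(x^k) with step size h = ((1−α)/(1+α))^{3/2}/(4L). Then for every N ≥ 0: f(x^N) − f* ≤ (1 − ((1−α)³/(1+α))·μ/(8L))^N·(f(x⁰) − f*) + (3/2)·((1+α)/(1−α)³)·δ²/μ. -/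
open scoped InnerProductSpace

private lemma aux_sqrt_le {a b : ℝ} (ha : 0 ≤ a) (hb : 0 ≤ b) (h : a * a ≤ b * b) :
    a ≤ b := by nlinarith

private lemma aux_Rfacts (α : ℝ) (hα0 : 0 ≤ α) (hα1 : α < 1) :
    0 < ((1-α)/(1+α)) ^ ((3:ℝ)/2) ∧
    ((1-α)/(1+α)) ^ ((3:ℝ)/2) * (1+α) ≤ 1 ∧
    ((1-α)/(1+α)) ^ ((3:ℝ)/2) * (1+α)^2 ≤ 1-α ∧
    (1-α)^3 = (((1-α)/(1+α)) ^ ((3:ℝ)/2))^2 * (1+α)^3 ∧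
    ((1-α)/(1+α)) ^ ((3:ℝ)/2) ≤ 1-α := by
  have hA1pos : 0 < 1 - α := by linarith
  have hB1pos : 0 < 1 + α := by linarith
  set rr := (1-α) / (1+α) with hrr
  have hrrpos : 0 < rr := div_pos hA1pos hB1pos
  have hrrle1 : rr ≤ 1 := by rw [hrr, div_le_one hB1pos]; linarith
  set R := rr ^ ((3:ℝ)/2) with hRdef
  have hRpos : 0 < R := Real.rpow_pos_of_pos hrrpos _
  have hRR : R * R = rr ^ 3 := by
    rw [hRdef, ← Real.rpow_add hrrpos]
    norm_num
  have hRle : R ≤ rr := by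
    calc R ≤ rr ^ (1:ℝ) := Real.rpow_le_rpow_of_exponent_ge hrrpos hrrle1 (by norm_num)
    _ = rr := Real.rpow_one rr
  have hA1eq : rr * (1+α) = 1-α := div_mul_cancel₀ _ hB1pos.ne'
  have hRB1 : R * (1+α) ≤ rr := by
    have h2 : rr * (1+α) ^ 2 ≤ 1 := by nlinarith [sq_nonneg α]
    have h1 : (R*(1+α))*(R*(1+α)) ≤ rr * rr := by nlinarith [hRR, hrrpos.le]
    exact aux_sqrt_le (by positivity) hrrpos.le h1
  have hRB1le1 : R * (1+α) ≤ 1 := hRB1.trans hrrle1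
  have hK7 : R * (1+α)^2 ≤ 1-α := by nlinarith [hRB1, hB1pos]
  have hA3 : (1-α)^3 = R^2 * (1+α)^3 := by
    rw [← hA1eq]; linear_combination (-((1+α)^3)) * hRR
  have hRleA1 : R ≤ 1-α := by nlinarith [hK7, hB1pos, hRpos, sq_nonneg α]
  exact ⟨hRpos, hRB1le1, hK7, hA3, hRleA1⟩

private lemma aux_P (A1 B1 R G d : ℝ) (hA1pos : 0 < A1) (hB1pos : 0 < B1) (hA1le1 : A1 ≤ 1)
    (hRpos : 0 < R) (hRB1le1 : R * B1 ≤ 1)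
    (hK7 : R * B1 ^ 2 ≤ A1) (hRleA1 : R ≤ A1) :
    0 ≤ 8*R*A1*G^2 - 8*R*d*G - R^2*(B1*G+d)^2 - 2*R^2*B1^2*G^2 + 6*d^2 := by
  have hRle1 : R ≤ 1 := hRleA1.trans hA1le1
  have hc : 2*R^2*B1 ≤ 2*R := by nlinarith [hRB1le1, hRpos]
  have hcsq : (8*R+2*R^2*B1)^2 ≤ 100*R^2 := by
    nlinarith [hRpos, mul_pos (mul_pos hRpos hRpos) hB1pos]
  have h2 : (8*R+2*R^2*B1)^2 ≤ 20*R*A1*(6-R^2) := by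
    have t1 : 100*R^2 ≤ 100*R*A1 := by nlinarith [hRpos]
    have hR2 : R^2 ≤ 1 := by nlinarith [hRle1, hRpos]
    have t2 : 100*R*A1 ≤ 20*R*A1*(6-R^2) := by
      nlinarith [mul_nonneg (mul_pos hRpos hA1pos).le (sub_nonneg.2 hR2)]
    linarith
  nlinarith [sq_nonneg (10*R*A1*G - (8*R+2*R^2*B1)*d),
    mul_nonneg (mul_nonneg (by positivity : (0:ℝ) ≤ 60*R^2*A1) (sub_nonneg.2 hK7)) (sq_nonneg G),
    mul_nonneg (sub_nonneg.2 h2) (sq_nonneg d),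
    mul_pos hRpos hA1pos]

private lemma aux_muL {μ L u v : ℝ} (hμ : 0 < μ) (hu : 0 < u)
    (h2 : 2*μ*u ≤ v) (h3 : v ≤ 2*L*u) : μ ≤ L := by nlinarith

private lemma aux_q0 {a b : ℝ} (ha0 : 0 ≤ a) (ha1 : a ≤ 1) (hb0 : 0 ≤ b) (hb1 : b ≤ 1/8) :
    0 ≤ 1 - a * b := by nlinarith


set_option maxHeartbeats 1600000 in
/-- Linear convergence (up to a noise level) of gradient descent with composite noise
under the Polyak–Łojasiewicz condition. -/
theorem gd_PL_convergence {n : ℕ} (f : EuclideanSpace ℝ (Fin n) → ℝ)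
    (f' g : EuclideanSpace ℝ (Fin n) → EuclideanSpace ℝ (Fin n))
    (hgrad : ∀ x, HasGradientAt f (f' x) x)
    (L : ℝ) (hL : 0 < L)
    (hsmooth : ∀ x y : EuclideanSpace ℝ (Fin n),
      f y ≤ f x + ⟪f' x, y - x⟫_ℝ + L / 2 * ‖y - x‖ ^ 2)
    (fstar : ℝ) (hfstar : IsGLB (Set.range f) fstar)
    (μ : ℝ) (hμ : 0 < μ)
    (hPL : ∀ x, f x - fstar ≤ 1 / (2 * μ) * ‖f' x‖ ^ 2)
    (α δ : ℝ) (hα0 : 0 ≤ α) (hα1 : α < 1) (hδ : 0 ≤ δ)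
    (hnoise : ∀ x, ‖g x - f' x‖ ≤ α * ‖f' x‖ + δ)
    (h : ℝ) (hh : h = ((1 - α) / (1 + α)) ^ ((3 : ℝ) / 2) / (4 * L))
    (x : ℕ → EuclideanSpace ℝ (Fin n))
    (hrec : ∀ k : ℕ, x (k + 1) = x k - h • g (x k)) :
    ∀ N : ℕ,
      f (x N) - fstar ≤
        (1 - ((1 - α) ^ 3 / (1 + α)) * (μ / (8 * L))) ^ N * (f (x 0) - fstar)
          + (3 / 2) * ((1 + α) / (1 - α) ^ 3) * δ ^ 2 / μ := by
  obtain ⟨hRpos, hRB1le1, hK7, hA3, hRleA1⟩ := aux_Rfacts α hα0 hα1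
  set A1 := 1 - α with hA1
  set B1 := 1 + α with hB1
  set R := ((1-α)/(1+α)) ^ ((3:ℝ)/2) with hRdef
  clear_value A1 B1 R
  have hA1pos : 0 < A1 := by rw [hA1]; linarith
  have hB1pos : 0 < B1 := by rw [hB1]; linarith
  have hA1le1 : A1 ≤ 1 := by rw [hA1]; linarith
  have hB1ge1 : 1 ≤ B1 := by rw [hB1]; linarith
  have hhpos : 0 < h := by rw [hh]; exact div_pos hRpos (by linarith)
  have hlb : ∀ w, fstar ≤ f w := fun w => hfstar.1 ⟨w, rfl⟩
  have hBnn : 0 ≤ 3 / 2 * (B1 / A1 ^ 3) * δ ^ 2 / μ := by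
    apply div_nonneg _ hμ.le
    apply mul_nonneg _ (sq_nonneg δ)
    apply mul_nonneg (by norm_num)
    exact div_nonneg hB1pos.le (pow_nonneg hA1pos.le 3)
  by_cases hex : ∃ z, fstar < f z
  · obtain ⟨z, hz⟩ := hex
    have hμL : μ ≤ L := by
      have hs := hsmooth z (z - L⁻¹ • f' z)
      have harg : z - L⁻¹ • f' z - z = -(L⁻¹ • f' z) := by abel
      rw [harg, inner_neg_right, real_inner_smul_right, real_inner_self_eq_norm_sq,
        norm_neg, norm_smul, Real.norm_eq_abs, abs_of_pos (inv_pos.2 hL)] at hs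
      have hlbz := hlb (z - L⁻¹ • f' z)
      have key : f z - 1/(2*L)*‖f' z‖^2
          = f z + -(L⁻¹ * ‖f' z‖^2) + L/2 * (L⁻¹ * ‖f' z‖)^2 := by
        field_simp; ring
      have hdesc : fstar ≤ f z - 1/(2*L)*‖f' z‖^2 := by rw [key]; linarith only [hs, hlbz]
      have h2 : 2*μ*(f z - fstar) ≤ ‖f' z‖^2 := by
        have h1 := hPL z
        have e : 2*μ*(1/(2*μ)*‖f' z‖^2) = ‖f' z‖^2 := by field_simp
        calc 2*μ*(f z - fstar) ≤ 2*μ*(1/(2*μ)*‖f' z‖^2) :=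
              mul_le_mul_of_nonneg_left h1 (by linarith)
          _ = ‖f' z‖^2 := e
      have h3 : ‖f' z‖^2 ≤ 2*L*(f z - fstar) := by
        have t0 : 1/(2*L)*‖f' z‖^2 ≤ f z - fstar := by linarith only [hdesc]
        have t1 := mul_le_mul_of_nonneg_left t0 (by linarith : (0:ℝ) ≤ 2*L)
        have e : 2*L*(1/(2*L)*‖f' z‖^2) = ‖f' z‖^2 := by field_simp
        linarith only [t1, e.ge, e.le]
      exact aux_muL hμ (by linarith only [hz]) h2 h3
    have hratio : A1^3/B1 ≤ 1 := by
      rw [div_le_one hB1pos]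
      have hcube : A1^3 ≤ 1 := by nlinarith [hA1pos.le, hA1le1, mul_nonneg hA1pos.le hA1pos.le]
      linarith only [hcube, hB1ge1]
    have hratio0 : 0 ≤ A1^3/B1 := div_nonneg (pow_nonneg hA1pos.le 3) hB1pos.le
    have hmu8 : μ/(8*L) ≤ 1/8 := by
      rw [div_le_div_iff₀ (by linarith) (by norm_num)]; linarith
    have hmu80 : 0 ≤ μ/(8*L) := by positivity
    have hq0 : 0 ≤ 1 - A1^3/B1*(μ/(8*L)) := aux_q0 hratio0 hratio hmu80 hmu8
    have hstepAll : ∀ k : ℕ, f (x (k+1)) - fstar ≤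
        (1 - A1^3/B1*(μ/(8*L))) * (f (x k) - fstar) + 3*δ^2/(16*L) := by
      intro k
      set G := ‖f' (x k)‖ with hG
      clear_value G
      have hGnn : 0 ≤ G := hG ▸ norm_nonneg _
      have hxk : x (k+1) - x k = -(h • g (x k)) := by rw [hrec k]; abel
      have hs := hsmooth (x k) (x (k+1))
      rw [hxk, inner_neg_right, real_inner_smul_right, norm_neg, norm_smul,
        Real.norm_eq_abs, abs_of_pos hhpos] at hs
      have hipl : A1*G^2 - δ*G ≤ ⟪f' (x k), g (x k)⟫_ℝ := by
        have t1 : ⟪f' (x k), f' (x k) - g (x k)⟫_ℝ ≤ ‖f' (x k)‖ * ‖f' (x k) - g (x k)‖ :=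
          real_inner_le_norm _ _
        rw [norm_sub_rev] at t1
        have t3 : ⟪f' (x k), f' (x k) - g (x k)⟫_ℝ
            = ⟪f' (x k), f' (x k)⟫_ℝ - ⟪f' (x k), g (x k)⟫_ℝ := inner_sub_right _ _ _
        have t4 : ⟪f' (x k), f' (x k)⟫_ℝ = G^2 := by
          rw [hG]; exact real_inner_self_eq_norm_sq _
        have t6 : ‖f' (x k)‖ * ‖g (x k) - f' (x k)‖ ≤ G*(α*G+δ) := by
          rw [hG]; exact mul_le_mul_of_nonneg_left (hnoise (x k)) (norm_nonneg _)
        have hA1' : A1*G^2 - δ*G = G^2 - G*(α*G+δ) := by rw [hA1]; ring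
        rw [hA1']
        linarith only [t1, t3, t4, t6]
      have hgle : ‖g (x k)‖ ≤ B1*G + δ := by
        have t0 : ‖g (x k)‖ = ‖(g (x k) - f' (x k)) + f' (x k)‖ := by
          rw [show (g (x k) - f' (x k)) + f' (x k) = g (x k) by abel]
        have t1 := norm_add_le (g (x k) - f' (x k)) (f' (x k))
        have t2 := hnoise (x k)
        rw [hB1, t0]
        calc ‖(g (x k) - f' (x k)) + f' (x k)‖ ≤ ‖g (x k) - f' (x k)‖ + ‖f' (x k)‖ := t1
          _ ≤ (α*G+δ) + G := by rw [hG]; linarith only [t2]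
          _ = (1+α)*G + δ := by ring
      have e1 : h*(A1*G^2 - δ*G) ≤ h * ⟪f' (x k), g (x k)⟫_ℝ :=
        mul_le_mul_of_nonneg_left hipl hhpos.le
      have e2 : (h*‖g (x k)‖)^2 ≤ h^2*(B1*G+δ)^2 := by
        have t1 : h*‖g (x k)‖ ≤ h*(B1*G+δ) := mul_le_mul_of_nonneg_left hgle hhpos.le
        have t2 : 0 ≤ h*‖g (x k)‖ := mul_nonneg hhpos.le (norm_nonneg _)
        calc (h*‖g (x k)‖)^2 ≤ (h*(B1*G+δ))^2 := by nlinarith [t1, t2]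
          _ = h^2*(B1*G+δ)^2 := by ring
      have e3 : L/2*(h*‖g (x k)‖)^2 ≤ L/2*(h^2*(B1*G+δ)^2) :=
        mul_le_mul_of_nonneg_left e2 (by linarith)
      have hstep1 : f (x (k+1)) ≤ f (x k) - h*(A1*G^2 - δ*G) + L/2*(h^2*(B1*G+δ)^2) := by
        linarith only [hs, e1, e3]
      have hro : 0 ≤ A1^3/B1*(μ/(8*L)) := mul_nonneg hratio0 hmu80
      have H2 : (A1^3/B1*(μ/(8*L))) * (f (x k) - fstar) ≤ A1^3/(16*L*B1) * G^2 := by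
        calc (A1^3/B1*(μ/(8*L))) * (f (x k) - fstar)
            ≤ (A1^3/B1*(μ/(8*L))) * (1/(2*μ)*G^2) := by
              have hPLk : f (x k) - fstar ≤ 1/(2*μ)*G^2 := by rw [hG]; exact hPL (x k)
              exact mul_le_mul_of_nonneg_left hPLk hro
          _ = A1^3/(16*L*B1) * G^2 := by field_simp; ring
      have hP : 0 ≤ 8*R*A1*G^2 - 8*R*δ*G - R^2*(B1*G+δ)^2 - 2*R^2*B1^2*G^2 + 6*δ^2 :=
        aux_P A1 B1 R G δ hA1pos hB1pos hA1le1 hRpos hRB1le1 hK7 hRleA1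
      have H3 : -(h*(A1*G^2 - δ*G)) + L/2*(h^2*(B1*G+δ)^2)
          + A1^3/(16*L*B1)*G^2 - 3*δ^2/(16*L) ≤ 0 := by
        have key : -(h*(A1*G^2 - δ*G)) + L/2*(h^2*(B1*G+δ)^2)
            + A1^3/(16*L*B1)*G^2 - 3*δ^2/(16*L)
            = -(8*R*A1*G^2 - 8*R*δ*G - R^2*(B1*G+δ)^2 - 2*R^2*B1^2*G^2 + 6*δ^2)/(32*L) := by
          rw [hh, hA3]
          field_simp
          ring
        rw [key]
        exact div_nonpos_of_nonpos_of_nonneg (neg_nonpos.2 hP) (by linarith)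
      have hqex : (1 - A1^3/B1*(μ/(8*L))) * (f (x k) - fstar)
          = (f (x k) - fstar) - (A1^3/B1*(μ/(8*L)))*(f (x k) - fstar) := by ring
      linarith only [hstep1, H2, H3, hqex.ge, hqex.le]
    have hid : (A1^3/B1*(μ/(8*L))) * (3 / 2 * (B1 / A1 ^ 3) * δ ^ 2 / μ) = 3*δ^2/(16*L) := by
      field_simp
      ring
    intro N
    induction N with
    | zero =>
      rw [pow_zero, one_mul]
      linarith only [hBnn]
    | succ k ih =>
      have hstep := hstepAll k
      have hmono : (1 - A1^3/B1*(μ/(8*L))) * (f (x k) - fstar)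
          ≤ (1 - A1^3/B1*(μ/(8*L))) * ((1 - A1^3/B1*(μ/(8*L)))^k * (f (x 0) - fstar)
            + 3 / 2 * (B1 / A1 ^ 3) * δ ^ 2 / μ) :=
        mul_le_mul_of_nonneg_left ih hq0
      have hexp : (1 - A1^3/B1*(μ/(8*L))) * ((1 - A1^3/B1*(μ/(8*L)))^k * (f (x 0) - fstar)
            + 3 / 2 * (B1 / A1 ^ 3) * δ ^ 2 / μ)
          = (1 - A1^3/B1*(μ/(8*L)))^(k+1) * (f (x 0) - fstar)
            + 3 / 2 * (B1 / A1 ^ 3) * δ ^ 2 / μ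
            - (A1^3/B1*(μ/(8*L))) * (3 / 2 * (B1 / A1 ^ 3) * δ ^ 2 / μ) := by ring
      rw [hexp, hid] at hmono
      linarith only [hstep, hmono]
  · push_neg at hex
    have hfz : ∀ w, f w = fstar := fun w => le_antisymm (hex w) (hlb w)
    intro N
    rw [hfz (x N), hfz (x 0), sub_self, mul_zero, zero_add]
    exact hBnn
end

section
/- Let f : ℝ^n → ℝ be differentiable with gradient ∇f, let 0 < μ ≤ L, let 0 ≤ α < 1, δ ≥ 0, and let g̃ satisfy the composite noise condition with parameters α, δ. Then for every γ ≥ 0 and every x: ‖g̃(x)‖² ≥ (1 − (1/4)(μ/(2L))^γ)·(1−α)²·‖∇f(x)‖² − (4·(2L/μ)^γ − 1)·δ², and ‖g̃(x)‖² ≤ (1 + (1/4)(μ/(2L))^γ)·(1+α)²·‖∇f(x)‖² + (4·(2L/μ)^γ + 1)·δ². -/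
/-!
The noise condition and the triangle inequality give
`(1 - α)‖∇f x‖ - δ ≤ ‖g̃ x‖ ≤ (1 + α)‖∇f x‖ + δ`. Squaring, the cross term `2ad` is absorbed by
Young's inequality `2ad ≤ (p/4) a² + (4/p) d²` with weight `p = (μ/(2L))^γ`, whose inverse is
`(2L/μ)^γ`. When `a - d < 0` the lower bound is trivial as soon as `p ≤ 4`, and `μ ≤ L`, `γ ≥ 0`
give `p ≤ 1`.
-/

theorem two_mul_mul_le_mul_sq_add_inv_mul_sq {p : ℝ} (hp : 0 < p) (a d : ℝ) :
    2 * a * d ≤ 1 / 4 * p * a ^ 2 + 4 * p⁻¹ * d ^ 2 := by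
  have hsq : 0 ≤ p⁻¹ * (p * a / 2 - 2 * d) ^ 2 := by positivity
  have hpp : p⁻¹ * p = 1 := inv_mul_cancel₀ hp.ne'
  linear_combination hsq + (a ^ 2 / 4 * p - 2 * a * d) * hpp

theorem sq_le_of_le_add {p a d G : ℝ} (hp : 0 < p) (hG : 0 ≤ G) (h : G ≤ a + d) :
    G ^ 2 ≤ (1 + 1 / 4 * p) * a ^ 2 + (4 * p⁻¹ + 1) * d ^ 2 := by
  have hsq : G ^ 2 ≤ (a + d) ^ 2 := pow_le_pow_left₀ hG h 2
  nlinarith [two_mul_mul_le_mul_sq_add_inv_mul_sq hp a d]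

theorem le_sq_of_sub_le {p a d G : ℝ} (hp : 0 < p) (hp4 : p ≤ 4) (ha : 0 ≤ a)
    (h : a - d ≤ G) : (1 - 1 / 4 * p) * a ^ 2 - (4 * p⁻¹ - 1) * d ^ 2 ≤ G ^ 2 := by
  rcases le_or_gt a d with had | hda
  · have hsq : a ^ 2 ≤ d ^ 2 := pow_le_pow_left₀ ha had 2
    have hcoef : 1 - 1 / 4 * p ≤ 4 * p⁻¹ - 1 := by
      nlinarith [two_mul_mul_le_mul_sq_add_inv_mul_sq hp 1 1]
    nlinarith [sq_nonneg G, sq_nonneg d]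
  · have hsq : (a - d) ^ 2 ≤ G ^ 2 := pow_le_pow_left₀ (by linarith) h 2
    nlinarith [two_mul_mul_le_mul_sq_add_inv_mul_sq hp a d]

theorem noised_grad_norm_bounds_general {n : ℕ}
    (f' g : EuclideanSpace ℝ (Fin n) → EuclideanSpace ℝ (Fin n))
    (μ L : ℝ) (hμ : 0 < μ) (hμL : μ ≤ L)
    (α δ : ℝ) (hα1 : α < 1)
    (hnoise : ∀ x, ‖g x - f' x‖ ≤ α * ‖f' x‖ + δ) :
    ∀ γ : ℝ, 0 ≤ γ → ∀ x : EuclideanSpace ℝ (Fin n),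
      (1 - (1 / 4) * (μ / (2 * L)) ^ γ) * (1 - α) ^ 2 * ‖f' x‖ ^ 2
          - (4 * (2 * L / μ) ^ γ - 1) * δ ^ 2 ≤ ‖g x‖ ^ 2 ∧
      ‖g x‖ ^ 2 ≤ (1 + (1 / 4) * (μ / (2 * L)) ^ γ) * (1 + α) ^ 2 * ‖f' x‖ ^ 2
          + (4 * (2 * L / μ) ^ γ + 1) * δ ^ 2 := by
  intro γ hγ x
  have hbase : 0 < μ / (2 * L) := div_pos hμ (by linarith)
  have hp : 0 < (μ / (2 * L)) ^ γ := Real.rpow_pos_of_pos hbase γ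
  have hp1 : (μ / (2 * L)) ^ γ ≤ 1 :=
    Real.rpow_le_one hbase.le ((div_le_one (by linarith)).2 (by linarith)) hγ
  have hinv : (2 * L / μ) ^ γ = ((μ / (2 * L)) ^ γ)⁻¹ := by
    rw [← Real.inv_rpow hbase.le, inv_div]
  have hlo : (1 - α) * ‖f' x‖ - δ ≤ ‖g x‖ := by
    linarith [hnoise x, norm_sub_norm_le (f' x) (g x), norm_sub_rev (f' x) (g x)]
  have hup : ‖g x‖ ≤ (1 + α) * ‖f' x‖ + δ := by
    linarith [hnoise x, norm_le_insert' (g x) (f' x)]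
  rw [hinv, mul_assoc _ ((1 - α) ^ 2), mul_assoc _ ((1 + α) ^ 2), ← mul_pow, ← mul_pow]
  exact ⟨le_sq_of_sub_le hp (by linarith) (mul_nonneg (by linarith) (norm_nonneg _)) hlo,
    sq_le_of_le_add hp (norm_nonneg _) hup⟩

/-- Two-sided bounds on the squared norm of a composite-noise gradient estimate,
parameterized by an exponent γ. -/
theorem noised_grad_norm_bounds {n : ℕ} (f : EuclideanSpace ℝ (Fin n) → ℝ)
    (f' g : EuclideanSpace ℝ (Fin n) → EuclideanSpace ℝ (Fin n))
    (hgrad : ∀ x, HasGradientAt f (f' x) x)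
    (μ L : ℝ) (hμ : 0 < μ) (hμL : μ ≤ L)
    (α δ : ℝ) (hα0 : 0 ≤ α) (hα1 : α < 1) (hδ : 0 ≤ δ)
    (hnoise : ∀ x, ‖g x - f' x‖ ≤ α * ‖f' x‖ + δ) :
    ∀ γ : ℝ, 0 ≤ γ → ∀ x : EuclideanSpace ℝ (Fin n),
      (1 - (1 / 4) * (μ / (2 * L)) ^ γ) * (1 - α) ^ 2 * ‖f' x‖ ^ 2
          - (4 * (2 * L / μ) ^ γ - 1) * δ ^ 2 ≤ ‖g x‖ ^ 2 ∧
      ‖g x‖ ^ 2 ≤ (1 + (1 / 4) * (μ / (2 * L)) ^ γ) * (1 + α) ^ 2 * ‖f' x‖ ^ 2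
          + (4 * (2 * L / μ) ^ γ + 1) * δ ^ 2 :=
  noised_grad_norm_bounds_general f' g μ L hμ hμL α δ hα1 hnoise
end

section
/- Let f : ℝ^n → ℝ be differentiable with gradient ∇f and μ-strongly convex with 0 < μ ≤ L, let γ > 0, 0 ≤ α < 1, δ ≥ 0, and let g̃ satisfy the composite noise condition with parameters α, δ. Fix z ∈ ℝ^n and set c = f(z) − (1/μ)·((1 + (1/4)(μ/(2L))^γ)(1+α)² + 2α²)·‖∇f(z)‖² − (1/μ)·(4(2L/μ)^γ + 3)·δ² and u = z − (2/μ)·g̃(z). Then for every x ∈ ℝ^n: c + (μ/4)·‖x − u‖² ≤ f(x). -/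
open scoped InnerProductSpace

/-!
Strong convexity at `z` bounds `f x` below by `f z + ⟪∇f z, x - z⟫ + μ/2 ‖x - z‖²`. Completing the
square around `u = z - (2/μ) v` turns this into the quadratic minorant
`f z - (‖v - ∇f z‖² + ‖v‖²)/μ + μ/4 ‖x - u‖²` for an arbitrary vector `v`; the discarded part is
`μ/4 ‖(x - z) - (2/μ)(v - ∇f z)‖² ≥ 0`. For `v = g̃ z` the noise condition and Young's inequality
`(p + q)² ≤ (1 + ε) p² + (1 + ε⁻¹) q²`, with `ε = (μ/(2L))^γ / 4`, bound `‖v - ∇f z‖² + ‖v‖²`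
by the constants in `c`.
-/

lemma add_sq_le_one_add_mul_add_one_add_inv_mul (p q : ℝ) {ε : ℝ} (hε : 0 < ε) :
    (p + q) ^ 2 ≤ (1 + ε) * p ^ 2 + (1 + ε⁻¹) * q ^ 2 := by
  have young : 2 * p * q ≤ ε * p ^ 2 + ε⁻¹ * q ^ 2 := by
    have h := mul_nonneg hε.le (sq_nonneg (p - ε⁻¹ * q))
    field_simp at h ⊢
    nlinarith [h]
  nlinarith [young]

lemma sq_norm_sub_add_sq_norm_le {E : Type*} [SeminormedAddCommGroup E] {v w : E}
    {α δ ε : ℝ} (hε : 0 < ε) (h : ‖v - w‖ ≤ α * ‖w‖ + δ) :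
    ‖v - w‖ ^ 2 + ‖v‖ ^ 2 ≤ ((1 + ε) * (1 + α) ^ 2 + 2 * α ^ 2) * ‖w‖ ^ 2 + (ε⁻¹ + 3) * δ ^ 2 := by
  have hv : ‖v‖ ≤ (1 + α) * ‖w‖ + δ := by linarith [norm_le_norm_add_norm_sub' v w]
  have hsub_sq : ‖v - w‖ ^ 2 ≤ (α * ‖w‖ + δ) ^ 2 := pow_le_pow_left₀ (norm_nonneg _) h 2
  have hv_sq : ‖v‖ ^ 2 ≤ ((1 + α) * ‖w‖ + δ) ^ 2 := pow_le_pow_left₀ (norm_nonneg _) hv 2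
  have hsub_young := add_sq_le (a := α * ‖w‖) (b := δ)
  have hv_young := add_sq_le_one_add_mul_add_one_add_inv_mul ((1 + α) * ‖w‖) δ hε
  nlinarith [hsub_young, hv_young]

lemma quadratic_minorant_le_of_strongConvexity_ineq {E : Type*} [NormedAddCommGroup E]
    [InnerProductSpace ℝ E] {f : E → ℝ} {μ : ℝ} (hμ : 0 < μ) {z x grad : E} (v : E)
    (hsc : f z + ⟪grad, x - z⟫_ℝ + μ / 2 * ‖z - x‖ ^ 2 ≤ f x) :
    f z - (‖v - grad‖ ^ 2 + ‖v‖ ^ 2) / μ + μ / 4 * ‖x - (z - (2 / μ) • v)‖ ^ 2 ≤ f x := by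
  have hscale : ∀ w : E, μ / 4 * ‖(2 / μ) • w‖ ^ 2 = ‖w‖ ^ 2 / μ := fun w => by
    rw [norm_smul, Real.norm_of_nonneg (by positivity)]
    field_simp
    ring
  have hexpand : μ / 4 * ‖x - (z - (2 / μ) • v)‖ ^ 2
      = μ / 4 * ‖x - z‖ ^ 2 + ⟪x - z, v⟫_ℝ + ‖v‖ ^ 2 / μ := by
    rw [show x - (z - (2 / μ) • v) = (x - z) + (2 / μ) • v by abel, norm_add_sq_real,
      real_inner_smul_right, mul_add, mul_add, hscale]
    field_simp
    ring
  have hsquare : 0 ≤ μ / 4 * ‖x - z‖ ^ 2 - ⟪x - z, v - grad⟫_ℝ + ‖v - grad‖ ^ 2 / μ := by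
    have h : 0 ≤ μ / 4 * ‖(x - z) - (2 / μ) • (v - grad)‖ ^ 2 := by positivity
    rwa [norm_sub_sq_real, real_inner_smul_right, mul_add, mul_sub, hscale,
      show μ / 4 * (2 * (2 / μ * ⟪x - z, v - grad⟫_ℝ)) = ⟪x - z, v - grad⟫_ℝ by field_simp; ring] at h
  rw [norm_sub_rev, real_inner_comm] at hsc
  rw [inner_sub_right] at hsquare
  rw [add_div, hexpand]
  linarith

theorem quadratic_lower_bound_general {n : ℕ} (f : EuclideanSpace ℝ (Fin n) → ℝ)
    (f' g : EuclideanSpace ℝ (Fin n) → EuclideanSpace ℝ (Fin n))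
    (μ L : ℝ) (hμ : 0 < μ) (hμL : μ ≤ L)
    (hsc : ∀ x y : EuclideanSpace ℝ (Fin n),
      f x + ⟪f' x, y - x⟫_ℝ + μ / 2 * ‖x - y‖ ^ 2 ≤ f y)
    (γ : ℝ)
    (α δ : ℝ)
    (hnoise : ∀ x, ‖g x - f' x‖ ≤ α * ‖f' x‖ + δ)
    (z : EuclideanSpace ℝ (Fin n)) (c : ℝ) (u : EuclideanSpace ℝ (Fin n))
    (hc : c = f z
      - (1 / μ) * ((1 + (1 / 4) * (μ / (2 * L)) ^ γ) * (1 + α) ^ 2 + 2 * α ^ 2)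
          * ‖f' z‖ ^ 2
      - (1 / μ) * (4 * (2 * L / μ) ^ γ + 3) * δ ^ 2)
    (hu : u = z - (2 / μ) • g z) :
    ∀ x : EuclideanSpace ℝ (Fin n), c + (μ / 4) * ‖x - u‖ ^ 2 ≤ f x := by
  intro x
  have hratio : 0 < μ / (2 * L) := by have : 0 < L := hμ.trans_le hμL; positivity
  set ε := 1 / 4 * (μ / (2 * L)) ^ γ
  have hε : 0 < ε := by positivity
  have hε_inv : ε⁻¹ = 4 * (2 * L / μ) ^ γ := by
    rw [mul_inv, ← Real.inv_rpow hratio.le, inv_div, inv_div, div_one]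
  have hnoise_sq := sq_norm_sub_add_sq_norm_le hε (hnoise z)
  have hminorant := quadratic_minorant_le_of_strongConvexity_ineq hμ (g z) (hsc z x)
  rw [hε_inv] at hnoise_sq
  rw [hc, hu]
  calc _ = f z - ((((1 + ε) * (1 + α) ^ 2 + 2 * α ^ 2) * ‖f' z‖ ^ 2
          + (4 * (2 * L / μ) ^ γ + 3) * δ ^ 2) / μ) + μ / 4 * ‖x - (z - (2 / μ) • g z)‖ ^ 2 := by
        ring
    _ ≤ f z - (‖g z - f' z‖ ^ 2 + ‖g z‖ ^ 2) / μ + μ / 4 * ‖x - (z - (2 / μ) • g z)‖ ^ 2 := by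
        gcongr
    _ ≤ f x := hminorant

/-- A quadratic global lower bound on a strongly convex function constructed from a
composite-noise gradient estimate at a fixed point. -/
theorem quadratic_lower_bound {n : ℕ} (f : EuclideanSpace ℝ (Fin n) → ℝ)
    (f' g : EuclideanSpace ℝ (Fin n) → EuclideanSpace ℝ (Fin n))
    (hgrad : ∀ x, HasGradientAt f (f' x) x)
    (μ L : ℝ) (hμ : 0 < μ) (hμL : μ ≤ L)
    (hsc : ∀ x y : EuclideanSpace ℝ (Fin n),
      f x + ⟪f' x, y - x⟫_ℝ + μ / 2 * ‖x - y‖ ^ 2 ≤ f y)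
    (γ : ℝ) (hγ : 0 < γ)
    (α δ : ℝ) (hα0 : 0 ≤ α) (hα1 : α < 1) (hδ : 0 ≤ δ)
    (hnoise : ∀ x, ‖g x - f' x‖ ≤ α * ‖f' x‖ + δ)
    (z : EuclideanSpace ℝ (Fin n)) (c : ℝ) (u : EuclideanSpace ℝ (Fin n))
    (hc : c = f z
      - (1 / μ) * ((1 + (1 / 4) * (μ / (2 * L)) ^ γ) * (1 + α) ^ 2 + 2 * α ^ 2)
          * ‖f' z‖ ^ 2
      - (1 / μ) * (4 * (2 * L / μ) ^ γ + 3) * δ ^ 2)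
    (hu : u = z - (2 / μ) • g z) :
    ∀ x : EuclideanSpace ℝ (Fin n), c + (μ / 4) * ‖x - u‖ ^ 2 ≤ f x :=
  quadratic_lower_bound_general f f' g μ L hμ hμL hsc γ α δ hnoise z c u hc hu
end

section
/- Let 0 < μ ≤ L and 0 < α ≤ 1/3. Define γ* = min{ ln(3α)/ln(μ/(2L)), 1/2 }, s = (1 + (1/4)(μ/(2L))^{γ*})(1+α)² + 2α², m = (1 − (1/4)(μ/(2L))^{γ*})(1−α)² − 2α², L̂ = 8·((1+α)/(1−α)³)·L, q = μ/(2L̂), and let ω = ((m − s) + √((s − m)² + 4mq))/(2m) be the largest root of m·ω² + (s − m)·ω − q = 0. Then (1/150)·(μ/(2L))^{1−γ*} ≤ ω < 1. -/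
private lemma aux_bounds (x α s m : ℝ) (hx0 : 0 < x) (hx1 : x ≤ 1)
    (hα0 : 0 < α) (hα1 : α ≤ 1 / 3) (hα3 : α ≤ x / 3)
    (hs : s = (1 + 1 / 4 * x) * (1 + α) ^ 2 + 2 * α ^ 2)
    (hm : m = (1 - 1 / 4 * x) * (1 - α) ^ 2 - 2 * α ^ 2) :
    1 / 9 ≤ m ∧ m ≤ 1 ∧ 1 ≤ s ∧ 0 < s - m ∧ s - m ≤ 7 * x / 3 := by
  refine ⟨by nlinarith, by nlinarith, by nlinarith, by nlinarith, by nlinarith⟩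

private lemma aux_quad_upper (m D q ω : ℝ) (hm : 0 < m) (hD : 0 < D)
    (hq : q < m + D) (hω : 0 < ω) (hroot : m * ω ^ 2 + D * ω = q) : ω < 1 := by
  nlinarith [mul_pos hm hω]

private lemma aux_quad_lower (m D q c ω : ℝ) (hm : 0 < m) (hD : 0 < D)
    (hc : 0 ≤ c) (hω : 0 < ω) (hfc : m * c ^ 2 + D * c ≤ q)
    (hroot : m * ω ^ 2 + D * ω = q) : c ≤ ω := by
  nlinarith [mul_pos hm hω, mul_nonneg hm.le hc]

set_option maxHeartbeats 1600000 in
/-- Estimation of the momentum parameter ω of RE-AGM. -/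
theorem omega_estimation (μ L α : ℝ) (hμ : 0 < μ) (hμL : μ ≤ L)
    (hα0 : 0 < α) (hα1 : α ≤ 1 / 3)
    (γs s m Lhat q ω : ℝ)
    (hγs : γs = min (Real.log (3 * α) / Real.log (μ / (2 * L))) (1 / 2))
    (hs : s = (1 + (1 / 4) * (μ / (2 * L)) ^ γs) * (1 + α) ^ 2 + 2 * α ^ 2)
    (hm : m = (1 - (1 / 4) * (μ / (2 * L)) ^ γs) * (1 - α) ^ 2 - 2 * α ^ 2)
    (hLhat : Lhat = 8 * ((1 + α) / (1 - α) ^ 3) * L)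
    (hq : q = μ / (2 * Lhat))
    (hω : ω = ((m - s) + Real.sqrt ((s - m) ^ 2 + 4 * m * q)) / (2 * m)) :
    (1 / 150) * (μ / (2 * L)) ^ (1 - γs) ≤ ω ∧ ω < 1 := by
  have hL : 0 < L := lt_of_lt_of_le hμ hμL
  obtain ⟨r, hr⟩ : ∃ r : ℝ, r = μ / (2 * L) := ⟨_, rfl⟩
  rw [← hr] at hγs hs hm
  have hr0 : 0 < r := by rw [hr]; positivity
  have hrhalf : r ≤ 1 / 2 := by
    rw [hr, div_le_div_iff₀ (by positivity) (by norm_num)]; linarith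
  have hr1 : r < 1 := by linarith
  have hlogr : Real.log r < 0 := Real.log_neg hr0 hr1
  obtain ⟨x, hx⟩ : ∃ x : ℝ, x = r ^ γs := ⟨_, rfl⟩
  rw [← hx] at hs hm
  have hx0 : 0 < x := hx ▸ Real.rpow_pos_of_pos hr0 _
  -- γs bounds
  have hγ0 : 0 ≤ γs := by
    rw [hγs]
    apply le_min
    · exact div_nonneg_iff.mpr (Or.inr
        ⟨Real.log_nonpos (by linarith) (by linarith), hlogr.le⟩)
    · norm_num
  have hγhalf : γs ≤ 1 / 2 := hγs ▸ min_le_right _ _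
  have hx1 : x ≤ 1 := hx ▸ Real.rpow_le_one hr0.le hr1.le hγ0
  -- 3α ≤ x
  have h3α : 3 * α ≤ x := by
    have hle : γs ≤ Real.log (3 * α) / Real.log r := hγs ▸ min_le_left _ _
    have hlog : Real.log (3 * α) ≤ γs * Real.log r := by
      rw [le_div_iff_of_neg hlogr] at hle; linarith
    calc 3 * α = Real.exp (Real.log (3 * α)) := (Real.exp_log (by linarith)).symm
      _ ≤ Real.exp (γs * Real.log r) := Real.exp_le_exp.mpr hlog
      _ = x := by rw [hx, Real.rpow_def_of_pos hr0, mul_comm]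
  have hα3 : α ≤ x / 3 := by linarith
  -- r ≤ x^2
  have hrx2 : r ≤ x ^ 2 := by
    have h1 : r ^ (1 : ℝ) ≤ r ^ (2 * γs) :=
      Real.rpow_le_rpow_of_exponent_ge hr0 hr1.le (by linarith)
    have h2 : r ^ (2 * γs) = x ^ 2 := by
      rw [hx, mul_comm, Real.rpow_mul hr0.le, Real.rpow_two]
    rw [Real.rpow_one] at h1; rw [← h2]; exact h1
  -- basic bounds
  have hα1' : α < 1 := by linarith
  obtain ⟨hm9, hm1, hs1, hD0, hD73⟩ :=
    aux_bounds x α s m hx0 hx1 hα0 hα1 hα3 hs hm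
  have hm0 : (0:ℝ) < m := by linarith
  -- q in terms of r
  have h1α : (0:ℝ) < 1 - α := by linarith
  have hqr : q = r * (1 - α) ^ 3 / (8 * (1 + α)) := by
    rw [hq, hLhat, hr]
    have h1 : (1 - α) ^ 3 ≠ 0 := ne_of_gt (pow_pos h1α 3)
    field_simp
  have hq0 : 0 < q := by
    rw [hqr]
    exact div_pos (mul_pos hr0 (pow_pos h1α 3)) (by linarith)
  have hq36 : r / 36 ≤ q := by
    rw [hqr, div_le_div_iff₀ (by norm_num) (by linarith)]
    have hquad : (0:ℝ) ≤ 12 * α ^ 2 - 32 * α + 28 := by linarith [sq_nonneg α]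
    linarith [mul_nonneg hr0.le (mul_nonneg (by linarith : (0:ℝ) ≤ 1 - 3 * α) hquad)]
  have hq8 : q ≤ r / 8 := by
    rw [hqr, div_le_div_iff₀ (by linarith) (by norm_num)]
    linarith [mul_nonneg (mul_nonneg hr0.le hα0.le)
      (by linarith [sq_nonneg α] : (0:ℝ) ≤ 4 - 3 * α + α ^ 2)]
  -- the quadratic equation
  obtain ⟨Δ, hΔ⟩ : ∃ d : ℝ, d = (s - m) ^ 2 + 4 * m * q := ⟨_, rfl⟩
  rw [← hΔ] at hω
  have hΔ0 : 0 ≤ Δ := by rw [hΔ]; positivity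
  obtain ⟨S, hS⟩ : ∃ S : ℝ, S = Real.sqrt Δ := ⟨_, rfl⟩
  rw [← hS] at hω
  have hS0 : 0 ≤ S := hS ▸ Real.sqrt_nonneg _
  have hS2 : S ^ 2 = Δ := by rw [hS]; exact Real.sq_sqrt hΔ0
  have h1 : ω * (2 * m) - (m - s) = S := by
    rw [hω]; field_simp; ring
  have h2 : (ω * (2 * m) - (m - s)) ^ 2 = (s - m) ^ 2 + 4 * m * q := by
    rw [h1, hS2, hΔ]
  have hroot : m * ω ^ 2 + (s - m) * ω = q := by
    have h4 : (4 * m) * (m * ω ^ 2 + (s - m) * ω) = (4 * m) * q := by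
      linear_combination h2
    exact mul_left_cancel₀ (by positivity) h4
  -- ω > 0
  have hSgt : s - m < S := by
    by_contra hcon
    push_neg at hcon
    have hle : S ^ 2 ≤ (s - m) ^ 2 := pow_le_pow_left₀ hS0 hcon 2
    rw [hS2, hΔ] at hle
    linarith [mul_pos hm0 hq0]
  have hω0 : 0 < ω := by
    have h5 : 0 < ω * (2 * m) := by linarith
    have h6 := div_pos h5 (by linarith : (0:ℝ) < 2 * m)
    rwa [mul_div_cancel_right₀ _ (by linarith : (2:ℝ) * m ≠ 0)] at h6
  -- ω < 1
  have hqs : q < s := by linarith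
  have hωlt : ω < 1 := aux_quad_upper m (s - m) q ω hm0 hD0 (by linarith) hω0 hroot
  refine ⟨?_, hωlt⟩
  -- lower bound
  have hrpow : r ^ (1 - γs) = r / x := by
    rw [Real.rpow_sub hr0, Real.rpow_one, ← hx]
  rw [← hr, hrpow]
  have hc0 : 0 ≤ r / (150 * x) := by positivity
  have hfc : m * (r / (150 * x)) ^ 2 + (s - m) * (r / (150 * x)) ≤ q := by
    have he : m * (r / (150 * x)) ^ 2 + (s - m) * (r / (150 * x))
        = (m * r ^ 2 + (s - m) * (150 * x) * r) / (22500 * x ^ 2) := by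
      field_simp; ring
    have hb : m * r ^ 2 + (s - m) * (150 * x) * r ≤ 625 * (x ^ 2 * r) := by
      have hint1 : m * r ^ 2 ≤ 1 * (x ^ 2 * r) :=
        mul_le_mul hm1 (by linarith [mul_le_mul_of_nonneg_right hrx2 hr0.le])
          (by positivity) (by norm_num)
      have hint2 : (s - m) * ((150 * x) * r) ≤ (7 * x / 3) * ((150 * x) * r) :=
        mul_le_mul_of_nonneg_right hD73 (by positivity)
      have hint3 : (0:ℝ) ≤ x ^ 2 * r := by positivity
      linarith [hint1, hint2, hint3]
    calc m * (r / (150 * x)) ^ 2 + (s - m) * (r / (150 * x))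
        = (m * r ^ 2 + (s - m) * (150 * x) * r) / (22500 * x ^ 2) := he
      _ ≤ (625 * (x ^ 2 * r)) / (22500 * x ^ 2) := by gcongr
      _ = r / 36 := by field_simp; ring
      _ ≤ q := hq36
  have : r / (150 * x) ≤ ω :=
    aux_quad_lower m (s - m) q (r / (150 * x)) ω hm0 hD0 hc0 hω0 hfc hroot
  linarith [this, (by ring : (1:ℝ)/150 * (r / x) = r / (150 * x))]
end

section
/- Let f : ℝ^n → ℝ be differentiable with gradient ∇f and convex, with a global minimizer x*; let x⁰ ∈ ℝ^n, μ > 0, R = ‖x⁰ − x*‖, let α ≥ 0, and let g̃ satisfy the relative noise condition with parameter α. Define f_μ(x) = f(x) + (μ/2)‖x − x⁰‖², so ∇f_μ(x) = ∇f(x) + μ(x − x⁰), and define g̃_μ(x) = g̃(x) + μ(x − x⁰). Then for every x: ‖g̃_μ(x) − ∇f_μ(x)‖ ≤ 2α·‖∇f_μ(x)‖ + α·μ·R. -/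
/-!
Convexity at the minimizer gives `⟪∇f(x), x - x*⟫ ≥ 0`, so adding `μ (x - x*)` to `∇f(x)` does
not decrease its norm. Since `∇f(x) + μ (x - x*) = ∇f_μ(x) + μ (x⁰ - x*)`, this yields
`‖∇f(x)‖ ≤ ‖∇f_μ(x)‖ + μ R`, and the relative noise bound `α ‖∇f(x)‖` is then at most
`α ‖∇f_μ(x)‖ + α μ R`.
-/

open scoped InnerProductSpace

section

variable {E : Type*} [NormedAddCommGroup E] [InnerProductSpace ℝ E]

theorem norm_le_norm_add_of_inner_nonneg {v w : E} (h : 0 ≤ ⟪v, w⟫_ℝ) : ‖v‖ ≤ ‖v + w‖ := by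
  rw [← pow_le_pow_iff_left₀ (norm_nonneg _) (norm_nonneg _) two_ne_zero, norm_add_sq_real]
  nlinarith [sq_nonneg ‖w‖]

theorem inner_sub_nonneg_of_subgradient_of_le {f : E → ℝ} {v x y : E}
    (hsub : f x + ⟪v, y - x⟫_ℝ ≤ f y) (hle : f y ≤ f x) : 0 ≤ ⟪v, x - y⟫_ℝ := by
  rw [← neg_sub, inner_neg_right]
  linarith

theorem norm_le_norm_add_smul_sub_add {v x x0 xstar : E} {μ : ℝ} (hμ : 0 ≤ μ)
    (hv : 0 ≤ ⟪v, x - xstar⟫_ℝ) :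
    ‖v‖ ≤ ‖v + μ • (x - x0)‖ + μ * ‖x0 - xstar‖ :=
  calc ‖v‖ ≤ ‖v + μ • (x - xstar)‖ :=
        norm_le_norm_add_of_inner_nonneg (by rw [real_inner_smul_right]; exact mul_nonneg hμ hv)
    _ = ‖(v + μ • (x - x0)) + μ • (x0 - xstar)‖ := by
        rw [add_assoc, ← smul_add, sub_add_sub_cancel]
    _ ≤ ‖v + μ • (x - x0)‖ + ‖μ • (x0 - xstar)‖ := norm_add_le _ _
    _ = ‖v + μ • (x - x0)‖ + μ * ‖x0 - xstar‖ := by rw [norm_smul, Real.norm_of_nonneg hμ]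

end

theorem reg_noise_general {n : ℕ} (f : EuclideanSpace ℝ (Fin n) → ℝ)
    (f' g : EuclideanSpace ℝ (Fin n) → EuclideanSpace ℝ (Fin n))
    (hconv : ∀ x y : EuclideanSpace ℝ (Fin n), f x + ⟪f' x, y - x⟫_ℝ ≤ f y)
    (xstar : EuclideanSpace ℝ (Fin n)) (hmin : ∀ y, f xstar ≤ f y)
    (x0 : EuclideanSpace ℝ (Fin n)) (μ : ℝ) (hμ : 0 < μ)
    (R : ℝ) (hR : R = ‖x0 - xstar‖)
    (α : ℝ) (hα : 0 ≤ α)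
    (hnoise : ∀ x, ‖g x - f' x‖ ≤ α * ‖f' x‖) :
    ∀ x : EuclideanSpace ℝ (Fin n),
      ‖(g x + μ • (x - x0)) - (f' x + μ • (x - x0))‖ ≤
        2 * α * ‖f' x + μ • (x - x0)‖ + α * μ * R := by
  intro x
  have hgrad_le : ‖f' x‖ ≤ ‖f' x + μ • (x - x0)‖ + μ * R := hR ▸
    norm_le_norm_add_smul_sub_add hμ.le
      (inner_sub_nonneg_of_subgradient_of_le (hconv x xstar) (hmin x))
  rw [add_sub_add_right_eq_sub]
  calc ‖g x - f' x‖ ≤ α * ‖f' x‖ := hnoise x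
    _ ≤ α * (‖f' x + μ • (x - x0)‖ + μ * R) := mul_le_mul_of_nonneg_left hgrad_le hα
    _ ≤ 2 * α * ‖f' x + μ • (x - x0)‖ + α * μ * R := by
        nlinarith [mul_nonneg hα (norm_nonneg (f' x + μ • (x - x0)))]

/-- The regularized gradient estimate satisfies a composite noise condition. -/
theorem reg_noise {n : ℕ} (f : EuclideanSpace ℝ (Fin n) → ℝ)
    (f' g : EuclideanSpace ℝ (Fin n) → EuclideanSpace ℝ (Fin n))
    (hgrad : ∀ x, HasGradientAt f (f' x) x)
    (hconv : ∀ x y : EuclideanSpace ℝ (Fin n), f x + ⟪f' x, y - x⟫_ℝ ≤ f y)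
    (xstar : EuclideanSpace ℝ (Fin n)) (hmin : ∀ y, f xstar ≤ f y)
    (x0 : EuclideanSpace ℝ (Fin n)) (μ : ℝ) (hμ : 0 < μ)
    (R : ℝ) (hR : R = ‖x0 - xstar‖)
    (α : ℝ) (hα : 0 ≤ α)
    (hnoise : ∀ x, ‖g x - f' x‖ ≤ α * ‖f' x‖) :
    ∀ x : EuclideanSpace ℝ (Fin n),
      ‖(g x + μ • (x - x0)) - (f' x + μ • (x - x0))‖ ≤
        2 * α * ‖f' x + μ • (x - x0)‖ + α * μ * R :=
  reg_noise_general f f' g hconv xstar hmin x0 μ hμ R hR α hα hnoise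
end

section
/- Let f : ℝ^n → ℝ be differentiable with gradient ∇f, convex and L-smooth with L > 0, with a global minimizer x* and f* = f(x*); let 0 ≤ α < 1/2, let g̃ satisfy the relative noise condition with parameter α, and set R = ‖x⁰ − x*‖ for a starting point x⁰. Let 0 < ε < L·R². Then there exist a regularization parameter μ̂ > 0 and a step size h > 0 such that the iterates defined by x^{k+1} = x^k − h·(g̃(x^k) + μ̂·(x^k − x⁰)) satisfy f(x^N) − f* ≤ ε for some N ≤ 12·((1+α)²/(1−α)⁶)·(L·R²/ε)·ln(2·L·R²/ε) + 1. -/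
open scoped InnerProductSpace

/-- A global minimizer of a smooth function (in the sense of a quadratic upper bound)
has zero gradient vector. -/
lemma aux_min_grad_zero {E : Type*} [NormedAddCommGroup E] [InnerProductSpace ℝ E]
    (φ : E → ℝ) (φ' : E → E) (Λ : ℝ) (hΛ : 0 < Λ)
    (hsm : ∀ x y, φ y ≤ φ x + ⟪φ' x, y - x⟫_ℝ + Λ / 2 * ‖y - x‖ ^ 2)
    (xm : E) (hm : ∀ y, φ xm ≤ φ y) : φ' xm = 0 := by
  by_contra hne
  have hp : 0 < ‖φ' xm‖ := norm_pos_iff.mpr hne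
  have h1 := hsm xm (xm - (1 / Λ) • φ' xm)
  have h2 := hm (xm - (1 / Λ) • φ' xm)
  have e1 : xm - (1 / Λ) • φ' xm - xm = -((1 / Λ) • φ' xm) := by abel
  rw [e1, inner_neg_right, real_inner_smul_right, real_inner_self_eq_norm_sq, norm_neg,
    norm_smul, Real.norm_eq_abs, abs_of_pos (by positivity : (0:ℝ) < 1 / Λ), mul_pow] at h1
  have e2 : Λ / 2 * ((1 / Λ) ^ 2 * ‖φ' xm‖ ^ 2) = ‖φ' xm‖ ^ 2 / (2 * Λ) := by
    field_simp
  have e3 : (1 / Λ) * ‖φ' xm‖ ^ 2 = ‖φ' xm‖ ^ 2 / Λ := by ring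
  rw [e2] at h1
  have h4 : 0 < ‖φ' xm‖ ^ 2 / (2 * Λ) := by positivity
  have h5 : ‖φ' xm‖ ^ 2 / Λ = 2 * (‖φ' xm‖ ^ 2 / (2 * Λ)) := by field_simp
  nlinarith [h1, h2]


lemma aux_sq_le (a b : ℝ) (ha : 0 ≤ a) (hb : 0 ≤ b) (h : a ^ 2 ≤ b ^ 2) : a ≤ b := by
  nlinarith

lemma aux_dist_le (μ A B fb fs : ℝ) (hμ : 0 < μ) (hA : 0 ≤ A) (hB : 0 ≤ B)
    (h1 : fb + μ / 2 * A ^ 2 ≤ fs + μ / 2 * B ^ 2) (h2 : fs ≤ fb) : A ≤ B := by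
  have h4 : A ^ 2 ≤ B ^ 2 := by nlinarith
  exact aux_sq_le A B hA hB h4

lemma aux_pl (μ V G s : ℝ) (hμ : 0 < μ) (h : V ≤ G * s - μ / 2 * s ^ 2) :
    2 * μ * V ≤ G ^ 2 := by
  nlinarith [sq_nonneg (G - μ * s), mul_le_mul_of_nonneg_left h (le_of_lt (by linarith : (0:ℝ) < 2 * μ))]

lemma aux_hu (u G μ R V s w I1 I2 : ℝ) (hμ : 0 < μ) (hG : 0 ≤ G) (hR : 0 ≤ R)
    (hs : 0 ≤ s) (hu0 : 0 ≤ u)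
    (hu2 : u ^ 2 = G ^ 2 - 2 * (μ * (I1 + I2)) + μ ^ 2 * w ^ 2)
    (hi1 : V + μ / 2 * s ^ 2 ≤ I1) (hi2 : -(G * R) ≤ I2)
    (hw : w ≤ s + R) (hwnn : 0 ≤ w) (hsV : μ * s ^ 2 ≤ 2 * V) :
    u ≤ G + 2 * μ * R := by
  have hwsq : w ^ 2 ≤ (s + R) ^ 2 := by nlinarith
  have h4 : u ^ 2 ≤ (G + 2 * μ * R) ^ 2 := by
    nlinarith [mul_le_mul_of_nonneg_left hi1 (le_of_lt (by linarith : (0:ℝ) < 2 * μ)),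
      mul_le_mul_of_nonneg_left hi2 (le_of_lt (by linarith : (0:ℝ) < 2 * μ)),
      mul_le_mul_of_nonneg_left hwsq (by positivity : (0:ℝ) ≤ μ ^ 2),
      mul_le_mul_of_nonneg_left hsV hμ.le,
      mul_nonneg (mul_nonneg hμ.le hG) hR,
      mul_nonneg (sq_nonneg μ) (sq_nonneg (s - R))]
  exact aux_sq_le _ _ hu0 (by positivity) h4

lemma aux_s4 (α L μ R G δ st ρ Vinf : ℝ) (hα0 : 0 ≤ α)
    (hβ0 : 0 < 1 - α) (hγ0 : 0 < 1 + α) (hLF0 : 0 < L + μ)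
    (hG0 : 0 ≤ G) (hδ0 : 0 ≤ δ)
    (hstdef : st = (1 - α) / (4 * (L + μ) * (1 + α) ^ 2))
    (hρdef : ρ = st * μ * (1 - α))
    (hVinfdef : Vinf = 5 * α ^ 2 * μ * R ^ 2 / (1 - α) ^ 2)
    (hδdef : δ = 2 * α * μ * R) :
    -(st * ((1 - α) * G ^ 2 - δ * G)) + (L + μ) / 2 * (st ^ 2 * ((1 + α) * G + δ) ^ 2)
      ≤ -(st * (1 - α) / 2 * G ^ 2) + ρ * Vinf := by
  have hst0 : 0 < st := hstdef ▸ div_pos hβ0 (by positivity)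
  have master : (1 - α) ^ 2 * ((1 + α) * G + δ) ^ 2 + 8 * (1 + α) ^ 2 * (1 - α) * δ * G
      ≤ 4 * (1 - α) ^ 2 * (1 + α) ^ 2 * G ^ 2 + 10 * (1 + α) ^ 2 * δ ^ 2 := by
    nlinarith [sq_nonneg (3 * (1 - α) * (1 + α) * G - (5 + 3 * α) * δ), sq_nonneg δ,
      mul_nonneg hα0 (sq_nonneg δ), mul_nonneg (mul_nonneg hα0 hα0) (sq_nonneg δ),
      hG0, hδ0]
  have keyeq : (-(st * ((1 - α) * G ^ 2 - δ * G))
        + (L + μ) / 2 * (st ^ 2 * ((1 + α) * G + δ) ^ 2))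
        - (-(st * (1 - α) / 2 * G ^ 2) + ρ * Vinf)
      = st / (8 * (1 + α) ^ 2 * (1 - α))
        * (((1 - α) ^ 2 * ((1 + α) * G + δ) ^ 2 + 8 * (1 + α) ^ 2 * (1 - α) * δ * G)
          - (4 * (1 - α) ^ 2 * (1 + α) ^ 2 * G ^ 2 + 10 * (1 + α) ^ 2 * δ ^ 2)) := by
    subst hδdef hρdef hVinfdef hstdef
    have h1 : (1 - α : ℝ) ≠ 0 := ne_of_gt hβ0
    have h2 : (1 + α : ℝ) ≠ 0 := ne_of_gt hγ0
    have h3 : (L + μ : ℝ) ≠ 0 := ne_of_gt hLF0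
    field_simp
    ring
  have hq : 0 ≤ st / (8 * (1 + α) ^ 2 * (1 - α)) :=
    div_nonneg hst0.le (by positivity)
  have hd : (((1 - α) ^ 2 * ((1 + α) * G + δ) ^ 2 + 8 * (1 + α) ^ 2 * (1 - α) * δ * G)
      - (4 * (1 - α) ^ 2 * (1 + α) ^ 2 * G ^ 2 + 10 * (1 + α) ^ 2 * δ ^ 2)) ≤ 0 := by
    linarith
  have hqd := mul_nonpos_of_nonneg_of_nonpos hq hd
  linarith

lemma aux_core (α L ε R μ : ℝ) (hα0 : 0 ≤ α) (hβ0 : 0 < 1 - α) (hL : 0 < L)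
    (hR2 : 0 < R ^ 2) (hε0 : 0 < ε) (hε1 : ε < L * R ^ 2)
    (hμW : μ * ((10 * α ^ 2 + (1 - α) ^ 2) * (1 - α) ^ 2) = ε * (1 - α) ^ 4 / R ^ 2) :
    (10 * α ^ 2 + (1 - α) ^ 2) * (1 - α) ^ 2 * (L + μ) ≤ 3 * L := by
  have hαβ : α * (1 - α) ≤ 1 / 4 := by nlinarith [sq_nonneg (2 * α - 1)]
  have hαβ2 : α ^ 2 * (1 - α) ^ 2 ≤ 1 / 16 := by
    nlinarith [hαβ, mul_nonneg hα0 hβ0.le]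
  have hβ1 : (1 - α : ℝ) ≤ 1 := by linarith
  have hβ2 : (1 - α : ℝ) ^ 2 ≤ 1 := by nlinarith
  have hβ4 : (1 - α : ℝ) ^ 4 ≤ 1 := by nlinarith [hβ2, sq_nonneg (1 - α)]
  have hεR : ε * (1 - α) ^ 4 / R ^ 2 ≤ L := by
    rw [div_le_iff₀ hR2]
    nlinarith [mul_le_mul_of_nonneg_left hβ4 hε0.le]
  have t1 : L * (α ^ 2 * (1 - α) ^ 2) ≤ L * (1 / 16) :=
    mul_le_mul_of_nonneg_left hαβ2 hL.le
  have t2 : L * ((1 - α) ^ 4) ≤ L * 1 := mul_le_mul_of_nonneg_left hβ4 hL.le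
  linarith

lemma aux_rho14 (α L μ ρ : ℝ) (hα0 : 0 ≤ α) (hβ0 : 0 < 1 - α) (hμ0 : 0 < μ)
    (hL : 0 < L) (hρeq : ρ * (4 * (L + μ) * (1 + α) ^ 2) = μ * (1 - α) ^ 2) :
    ρ ≤ 1 / 4 := by
  have hγ0 : (0:ℝ) < 1 + α := by linarith
  have hXpos : (0:ℝ) < 4 * (L + μ) * (1 + α) ^ 2 := by positivity
  have hμβ2 : μ * (1 - α) ^ 2 ≤ (L + μ) * (1 + α) ^ 2 := by nlinarith
  nlinarith

set_option maxHeartbeats 1000000 in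
/-- Complexity of gradient descent with regularization for convex smooth functions
under relative gradient noise. -/
theorem gd_regularization_complexity {n : ℕ} (f : EuclideanSpace ℝ (Fin n) → ℝ)
    (f' g : EuclideanSpace ℝ (Fin n) → EuclideanSpace ℝ (Fin n))
    (hgrad : ∀ x, HasGradientAt f (f' x) x)
    (hconv : ∀ x y : EuclideanSpace ℝ (Fin n), f x + ⟪f' x, y - x⟫_ℝ ≤ f y)
    (L : ℝ) (hL : 0 < L)
    (hsmooth : ∀ x y : EuclideanSpace ℝ (Fin n),
      f y ≤ f x + ⟪f' x, y - x⟫_ℝ + L / 2 * ‖y - x‖ ^ 2)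
    (xstar : EuclideanSpace ℝ (Fin n)) (hmin : ∀ y, f xstar ≤ f y)
    (α : ℝ) (hα0 : 0 ≤ α) (hα1 : α < 1 / 2)
    (hnoise : ∀ x, ‖g x - f' x‖ ≤ α * ‖f' x‖)
    (x0 : EuclideanSpace ℝ (Fin n)) (R : ℝ) (hR : R = ‖x0 - xstar‖)
    (ε : ℝ) (hε0 : 0 < ε) (hε1 : ε < L * R ^ 2) :
    ∃ μhat h : ℝ, 0 < μhat ∧ 0 < h ∧
      ∃ N : ℕ,
        (N : ℝ) ≤ 12 * ((1 + α) ^ 2 / (1 - α) ^ 6) * (L * R ^ 2 / ε)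
            * Real.log (2 * L * R ^ 2 / ε) + 1 ∧
        ∀ x : ℕ → EuclideanSpace ℝ (Fin n), x 0 = x0 →
          (∀ k : ℕ, x (k + 1) = x k - h • (g (x k) + μhat • (x k - x0))) →
          f (x N) - f xstar ≤ ε := by
  -- basic positivity facts
  have hβ0 : (0:ℝ) < 1 - α := by linarith
  have hγ0 : (0:ℝ) < 1 + α := by linarith
  have hβne : (1 - α : ℝ) ≠ 0 := ne_of_gt hβ0
  have hγne : (1 + α : ℝ) ≠ 0 := ne_of_gt hγ0
  have hRnn : 0 ≤ R := hR ▸ norm_nonneg _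
  have hR2 : 0 < R ^ 2 := by nlinarith
  have hR0 : 0 < R := by nlinarith
  have hRne : R ≠ 0 := ne_of_gt hR0
  have hW0 : (0:ℝ) < 10 * α ^ 2 + (1 - α) ^ 2 :=
    add_pos_of_nonneg_of_pos (by positivity) (pow_pos hβ0 2)
  have hWne : (10 * α ^ 2 + (1 - α) ^ 2 : ℝ) ≠ 0 := ne_of_gt hW0
  set μ : ℝ := ε * (1 - α) ^ 2 / ((10 * α ^ 2 + (1 - α) ^ 2) * R ^ 2) with hμdef
  have hμ0 : 0 < μ := div_pos (mul_pos hε0 (pow_pos hβ0 2)) (mul_pos hW0 hR2)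
  have hLF0 : (0:ℝ) < L + μ := by linarith
  have hLFne : (L + μ : ℝ) ≠ 0 := ne_of_gt hLF0
  set st : ℝ := (1 - α) / (4 * (L + μ) * (1 + α) ^ 2) with hstdef
  have hst0 : 0 < st := div_pos hβ0 (by positivity)
  set ρ : ℝ := st * μ * (1 - α) with hρdef
  have hρ0 : 0 < ρ := mul_pos (mul_pos hst0 hμ0) hβ0
  set Vinf : ℝ := 5 * α ^ 2 * μ * R ^ 2 / (1 - α) ^ 2 with hVinfdef
  have hVinf0 : 0 ≤ Vinf := by
    apply div_nonneg _ (sq_nonneg _)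
    have : (0:ℝ) ≤ 5 * α ^ 2 := by positivity
    exact mul_nonneg (mul_nonneg this hμ0.le) (sq_nonneg R)
  clear_value μ st ρ Vinf
  -- the regularized function and its gradient
  set F : EuclideanSpace ℝ (Fin n) → ℝ := fun z => f z + μ / 2 * ‖z - x0‖ ^ 2 with hFdef
  set F' : EuclideanSpace ℝ (Fin n) → EuclideanSpace ℝ (Fin n) :=
    fun z => f' z + μ • (z - x0) with hF'def
  clear_value F F'
  have hexp2 : ∀ z y : EuclideanSpace ℝ (Fin n),
      ‖y - x0‖ ^ 2 = ‖z - x0‖ ^ 2 + 2 * ⟪z - x0, y - z⟫_ℝ + ‖y - z‖ ^ 2 := by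
    intro z y
    have h1 : y - x0 = (z - x0) + (y - z) := by abel
    rw [h1, norm_add_sq_real]
  have hFinner : ∀ z y : EuclideanSpace ℝ (Fin n),
      ⟪F' z, y⟫_ℝ = ⟪f' z, y⟫_ℝ + μ * ⟪z - x0, y⟫_ℝ := by
    intro z y
    simp only [hF'def]
    rw [inner_add_left, real_inner_smul_left]
  -- smoothness of F
  have hA : ∀ z y, F y ≤ F z + ⟪F' z, y - z⟫_ℝ + (L + μ) / 2 * ‖y - z‖ ^ 2 := by
    intro z y
    have h1 := hsmooth z y
    have h2 : μ / 2 * ‖y - x0‖ ^ 2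
        = μ / 2 * ‖z - x0‖ ^ 2 + μ * ⟪z - x0, y - z⟫_ℝ + μ / 2 * ‖y - z‖ ^ 2 := by
      rw [hexp2 z y]; ring
    have h3 := hFinner z (y - z)
    simp only [hFdef]
    rw [h3] at *
    linarith
  -- strong convexity of F
  have hB : ∀ z y, F z + ⟪F' z, y - z⟫_ℝ + μ / 2 * ‖y - z‖ ^ 2 ≤ F y := by
    intro z y
    have h1 := hconv z y
    have h2 : μ / 2 * ‖y - x0‖ ^ 2
        = μ / 2 * ‖z - x0‖ ^ 2 + μ * ⟪z - x0, y - z⟫_ℝ + μ / 2 * ‖y - z‖ ^ 2 := by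
      rw [hexp2 z y]; ring
    have h3 := hFinner z (y - z)
    simp only [hFdef]
    rw [h3] at *
    linarith
  -- continuity of F
  have hfc : Continuous f := continuous_iff_continuousAt.mpr fun x => (hgrad x).continuousAt
  have hFc : Continuous F := by
    simp only [hFdef]
    exact hfc.add (continuous_const.mul (((continuous_id.sub continuous_const).norm).pow 2))
  -- existence of a minimizer of F
  have hcoer : ∀ᶠ y in Filter.cocompact (EuclideanSpace ℝ (Fin n)), F x0 ≤ F y := by
    have h0 : Filter.Tendsto norm (Filter.cocompact (EuclideanSpace ℝ (Fin n))) Filter.atTop :=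
      tendsto_norm_cocompact_atTop
    filter_upwards [h0.eventually (Filter.eventually_ge_atTop (‖x0‖ + 2 * ‖F' x0‖ / μ))] with y hy
    have h1 : 2 * ‖F' x0‖ / μ ≤ ‖y - x0‖ := by
      have := norm_sub_norm_le y x0
      linarith [this]
    have h1' : 2 * ‖F' x0‖ ≤ μ * ‖y - x0‖ := by
      rw [div_le_iff₀ hμ0] at h1; linarith
    have h2 : -(‖F' x0‖ * ‖y - x0‖) ≤ ⟪F' x0, y - x0⟫_ℝ :=
      neg_le_of_abs_le (abs_real_inner_le_norm _ _)
    have h3 := hB x0 y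
    have h4 : 2 * ‖F' x0‖ * ‖y - x0‖ ≤ μ * ‖y - x0‖ * ‖y - x0‖ :=
      mul_le_mul_of_nonneg_right h1' (norm_nonneg (y - x0))
    have h5 : μ * ‖y - x0‖ * ‖y - x0‖ = μ * ‖y - x0‖ ^ 2 := by ring
    rw [h5] at h4
    linarith [h2, h3, h4]
  obtain ⟨xbar, hxbar⟩ := hFc.exists_forall_le' x0 hcoer
  -- zero gradients at minimizers
  have hfstar0 : f' xstar = 0 := aux_min_grad_zero f f' L hL hsmooth xstar hmin
  have hFbar0 : F' xbar = 0 := aux_min_grad_zero F F' (L + μ) hLF0 hA xbar hxbar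
  -- distance from xbar to x0 is at most R
  have hDle : ‖xbar - x0‖ ≤ R := by
    have h1 := hxbar xstar
    have h2 := hmin xbar
    have h3 : ‖xstar - x0‖ = R := by rw [norm_sub_rev, ← hR]
    simp only [hFdef] at h1
    rw [h3] at h1
    exact aux_dist_le μ _ _ _ _ hμ0 (norm_nonneg _) hRnn h1 h2
  -- PL inequality for F
  have hPLlem : ∀ z, 2 * μ * (F z - F xbar) ≤ ‖F' z‖ ^ 2 := by
    intro z
    have h1 := hB z xbar
    have h2 : -(‖F' z‖ * ‖xbar - z‖) ≤ ⟪F' z, xbar - z⟫_ℝ :=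
      neg_le_of_abs_le (abs_real_inner_le_norm _ _)
    have h3 : F z - F xbar ≤ ‖F' z‖ * ‖xbar - z‖ - μ / 2 * ‖xbar - z‖ ^ 2 := by linarith
    exact aux_pl μ _ _ _ hμ0 h3
  -- the key one-step estimate
  have STEP : ∀ z, F (z - st • (g z + μ • (z - x0))) - F xbar
      ≤ (1 - ρ) * (F z - F xbar) + ρ * Vinf := by
    intro z
    have hgt : g z + μ • (z - x0) = F' z + (g z - f' z) := by
      simp only [hF'def]; abel
    set e := g z - f' z with hedef
    set G := ‖F' z‖ with hGdef
    set u := ‖f' z‖ with hudef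
    set δ : ℝ := 2 * α * μ * R with hδdef
    have hG0 : 0 ≤ G := norm_nonneg _
    have hu0 : 0 ≤ u := norm_nonneg _
    have hδ0 : 0 ≤ δ := by
      rw [hδdef]
      exact mul_nonneg (mul_nonneg (mul_nonneg (by norm_num) hα0) hμ0.le) hRnn
    have hV0 : 0 ≤ F z - F xbar := sub_nonneg.mpr (hxbar z)
    have hs2V : μ * ‖z - xbar‖ ^ 2 ≤ 2 * (F z - F xbar) := by
      have h1 := hB xbar z
      rw [hFbar0, inner_zero_left] at h1
      linarith
    have hPL := hPLlem z
    have hnz : ‖e‖ ≤ α * u := by rw [hedef, hudef]; exact hnoise z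
    -- bound on ‖f' z‖ in terms of ‖F' z‖
    have hDu : u ≤ G + 2 * μ * R := by
      have hfe : f' z = F' z - μ • (z - x0) := by simp only [hF'def]; abel
      have hu2 : u ^ 2 = G ^ 2 - 2 * (μ * ⟪F' z, z - x0⟫_ℝ) + μ ^ 2 * ‖z - x0‖ ^ 2 := by
        rw [hudef, hfe, norm_sub_sq_real, real_inner_smul_right, norm_smul,
          Real.norm_eq_abs, abs_of_pos hμ0, mul_pow]
      have hinner1 : F z - F xbar + μ / 2 * ‖z - xbar‖ ^ 2 ≤ ⟪F' z, z - xbar⟫_ℝ := by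
        have h1 := hB z xbar
        have h2 : ⟪F' z, xbar - z⟫_ℝ = -⟪F' z, z - xbar⟫_ℝ := by
          rw [show xbar - z = -(z - xbar) by abel, inner_neg_right]
        rw [h2, norm_sub_rev xbar z] at h1
        linarith
      have hinner2 : -(G * R) ≤ ⟪F' z, xbar - x0⟫_ℝ := by
        have h1 := neg_le_of_abs_le (abs_real_inner_le_norm (F' z) (xbar - x0))
        have h2 : G * ‖xbar - x0‖ ≤ G * R := mul_le_mul_of_nonneg_left hDle hG0
        linarith
      have hsplit : ⟪F' z, z - x0⟫_ℝ = ⟪F' z, z - xbar⟫_ℝ + ⟪F' z, xbar - x0⟫_ℝ := by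
        rw [← inner_add_right]; congr 1; abel
      have hzx0 : ‖z - x0‖ ≤ ‖z - xbar‖ + R := by
        calc ‖z - x0‖ = ‖(z - xbar) + (xbar - x0)‖ := by congr 1; abel
        _ ≤ ‖z - xbar‖ + ‖xbar - x0‖ := norm_add_le _ _
        _ ≤ ‖z - xbar‖ + R := by linarith
      rw [hsplit] at hu2
      have hsV' : μ * ‖z - xbar‖ ^ 2 ≤ 2 * (F z - F xbar) := hs2V
      exact aux_hu u G μ R (F z - F xbar) (‖z - xbar‖) (‖z - x0‖) _ _ hμ0 hG0 hRnn
        (norm_nonneg _) hu0 hu2 hinner1 hinner2 hzx0 (norm_nonneg _) hsV'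
    -- inner product and norm bounds for the noisy step direction
    have hs1 : (1 - α) * G ^ 2 - δ * G ≤ ⟪F' z, F' z + e⟫_ℝ := by
      have h1 : ⟪F' z, F' z + e⟫_ℝ = G ^ 2 + ⟪F' z, e⟫_ℝ := by
        rw [inner_add_right, real_inner_self_eq_norm_sq]
      have h2 : -(G * ‖e‖) ≤ ⟪F' z, e⟫_ℝ := neg_le_of_abs_le (abs_real_inner_le_norm _ _)
      have h3 : G * ‖e‖ ≤ G * (α * u) := mul_le_mul_of_nonneg_left hnz hG0
      have h4 : G * (α * u) ≤ G * (α * (G + 2 * μ * R)) :=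
        mul_le_mul_of_nonneg_left (mul_le_mul_of_nonneg_left hDu hα0) hG0
      rw [h1]
      simp only [hδdef]
      linarith [h2, h3, h4]
    have hs2 : ‖F' z + e‖ ^ 2 ≤ ((1 + α) * G + δ) ^ 2 := by
      have h1 : ‖F' z + e‖ ≤ (1 + α) * G + δ := by
        have h2 := norm_add_le (F' z) e
        have h3 : α * u ≤ α * (G + 2 * μ * R) := mul_le_mul_of_nonneg_left hDu hα0
        simp only [hδdef]
        linarith [h2, h3, hnz]
      exact pow_le_pow_left₀ (norm_nonneg _) h1 2
    have hdesc : F (z - st • (F' z + e))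
        ≤ F z - st * ⟪F' z, F' z + e⟫_ℝ + (L + μ) / 2 * (st ^ 2 * ‖F' z + e‖ ^ 2) := by
      have h1 := hA z (z - st • (F' z + e))
      have h2 : z - st • (F' z + e) - z = -(st • (F' z + e)) := by abel
      rw [h2, inner_neg_right, real_inner_smul_right, norm_neg, norm_smul,
        Real.norm_eq_abs, abs_of_pos hst0, mul_pow] at h1
      linarith
    -- the scalar core inequality
    have hs4 : -(st * ((1 - α) * G ^ 2 - δ * G))
          + (L + μ) / 2 * (st ^ 2 * ((1 + α) * G + δ) ^ 2)
        ≤ -(st * (1 - α) / 2 * G ^ 2) + ρ * Vinf :=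
      aux_s4 α L μ R G δ st ρ Vinf hα0 hβ0 hγ0 hLF0 hG0 hδ0 hstdef hρdef hVinfdef hδdef
    have hs5 : ρ * (F z - F xbar) ≤ st * (1 - α) / 2 * G ^ 2 := by
      have h1 : st * (1 - α) / 2 * (2 * μ * (F z - F xbar)) ≤ st * (1 - α) / 2 * G ^ 2 :=
        mul_le_mul_of_nonneg_left hPL (by positivity)
      calc ρ * (F z - F xbar) = st * (1 - α) / 2 * (2 * μ * (F z - F xbar)) := by
            rw [hρdef]; ring
      _ ≤ st * (1 - α) / 2 * G ^ 2 := h1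
    have hfin1 : st * ((1 - α) * G ^ 2 - δ * G) ≤ st * ⟪F' z, F' z + e⟫_ℝ :=
      mul_le_mul_of_nonneg_left hs1 hst0.le
    have hfin2 : (L + μ) / 2 * (st ^ 2 * ‖F' z + e‖ ^ 2)
        ≤ (L + μ) / 2 * (st ^ 2 * ((1 + α) * G + δ) ^ 2) := by
      apply mul_le_mul_of_nonneg_left _ (by positivity)
      exact mul_le_mul_of_nonneg_left hs2 (sq_nonneg st)
    rw [hgt]
    linarith [hdesc, hfin1, hfin2, hs4, hs5]
  -- initial gap
  have hFx0 : F x0 = f x0 := by simp only [hFdef]; simp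
  have hfbarF : f xbar ≤ F xbar := by
    simp only [hFdef]
    exact le_add_of_nonneg_right (mul_nonneg (by linarith) (by positivity))
  have hV0nn : 0 ≤ F x0 - F xbar := sub_nonneg.mpr (hxbar x0)
  have hV0le : F x0 - F xbar ≤ L * R ^ 2 / 2 := by
    have h2 : f xstar ≤ F xbar := le_trans (hmin xbar) hfbarF
    have h3 := hsmooth xstar x0
    rw [hfstar0, inner_zero_left] at h3
    have h4 : ‖x0 - xstar‖ = R := hR.symm
    rw [h4] at h3
    rw [hFx0]
    linarith
  -- choice of N
  have hLR2 : 0 < 2 * L * R ^ 2 / ε := by positivity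
  have hlogpos : 0 < Real.log (2 * L * R ^ 2 / ε) := by
    apply Real.log_pos
    rw [lt_div_iff₀ hε0]
    linarith [hε1, mul_pos hL hR2]
  set N : ℕ := ⌈Real.log (2 * L * R ^ 2 / ε) / ρ⌉₊ with hNdef
  -- verify the iteration-count bound
  have hsteq : st * (4 * (L + μ) * (1 + α) ^ 2) = 1 - α := by
    rw [hstdef]; field_simp
  have hρeq : ρ * (4 * (L + μ) * (1 + α) ^ 2) = μ * (1 - α) ^ 2 := by
    calc ρ * (4 * (L + μ) * (1 + α) ^ 2)
        = (st * (4 * (L + μ) * (1 + α) ^ 2)) * (μ * (1 - α)) := by rw [hρdef]; ring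
    _ = (1 - α) * (μ * (1 - α)) := by rw [hsteq]
    _ = μ * (1 - α) ^ 2 := by ring
  have hμeq : μ * ((10 * α ^ 2 + (1 - α) ^ 2) * R ^ 2) = ε * (1 - α) ^ 2 := by
    rw [hμdef]; field_simp
  have hcore : (10 * α ^ 2 + (1 - α) ^ 2) * (1 - α) ^ 2 * (L + μ) ≤ 3 * L := by
    have hμW : μ * ((10 * α ^ 2 + (1 - α) ^ 2) * (1 - α) ^ 2) = ε * (1 - α) ^ 4 / R ^ 2 := by
      rw [hμdef]; field_simp
    exact aux_core α L ε R μ hα0 hβ0 hL hR2 hε0 hε1 hμW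
  have hKP : (1 - α) ^ 6 * ε ≤ 12 * (1 + α) ^ 2 * (L * R ^ 2) * ρ := by
    have hXpos : (0:ℝ) < 4 * (L + μ) * (1 + α) ^ 2 := by positivity
    rw [← mul_le_mul_iff_of_pos_right (mul_pos hXpos hW0)]
    have e1 : 12 * (1 + α) ^ 2 * (L * R ^ 2) * ρ
          * ((4 * (L + μ) * (1 + α) ^ 2) * (10 * α ^ 2 + (1 - α) ^ 2))
        = 12 * (1 + α) ^ 2 * L * ε * (1 - α) ^ 4 := by
      calc 12 * (1 + α) ^ 2 * (L * R ^ 2) * ρ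
            * ((4 * (L + μ) * (1 + α) ^ 2) * (10 * α ^ 2 + (1 - α) ^ 2))
          = 12 * (1 + α) ^ 2 * L * ((ρ * (4 * (L + μ) * (1 + α) ^ 2))
            * (R ^ 2 * (10 * α ^ 2 + (1 - α) ^ 2))) := by ring
      _ = 12 * (1 + α) ^ 2 * L * ((μ * (1 - α) ^ 2)
            * (R ^ 2 * (10 * α ^ 2 + (1 - α) ^ 2))) := by rw [hρeq]
      _ = 12 * (1 + α) ^ 2 * L * ((1 - α) ^ 2
            * (μ * ((10 * α ^ 2 + (1 - α) ^ 2) * R ^ 2))) := by ring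
      _ = 12 * (1 + α) ^ 2 * L * ((1 - α) ^ 2 * (ε * (1 - α) ^ 2)) := by rw [hμeq]
      _ = 12 * (1 + α) ^ 2 * L * ε * (1 - α) ^ 4 := by ring
    have hcpos : (0:ℝ) < 4 * (1 + α) ^ 2 * ε * (1 - α) ^ 4 := by positivity
    have e2 := mul_le_mul_of_nonneg_left hcore hcpos.le
    rw [e1]
    linarith [e2]
  have h1C : 1 ≤ 12 * ((1 + α) ^ 2 / (1 - α) ^ 6) * (L * R ^ 2 / ε) * ρ := by
    have heq : 12 * ((1 + α) ^ 2 / (1 - α) ^ 6) * (L * R ^ 2 / ε) * ρ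
        = (12 * (1 + α) ^ 2 * (L * R ^ 2) * ρ) / ((1 - α) ^ 6 * ε) := by
      field_simp
    rw [heq]
    rw [le_div_iff₀ (by positivity)]
    linarith [hKP]
  have hNbound : (N : ℝ) ≤ 12 * ((1 + α) ^ 2 / (1 - α) ^ 6) * (L * R ^ 2 / ε)
      * Real.log (2 * L * R ^ 2 / ε) + 1 := by
    have hNceil : (N : ℝ) < Real.log (2 * L * R ^ 2 / ε) / ρ + 1 :=
      Nat.ceil_lt_add_one (le_of_lt (div_pos hlogpos hρ0))
    have h2 : Real.log (2 * L * R ^ 2 / ε) / ρ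
        ≤ 12 * ((1 + α) ^ 2 / (1 - α) ^ 6) * (L * R ^ 2 / ε)
          * Real.log (2 * L * R ^ 2 / ε) := by
      rw [div_le_iff₀ hρ0]
      linarith [mul_le_mul_of_nonneg_left h1C hlogpos.le]
    linarith
  -- bound on the exponential decay factor
  have hρN : Real.log (2 * L * R ^ 2 / ε) ≤ ρ * N := by
    have h1 := Nat.le_ceil (Real.log (2 * L * R ^ 2 / ε) / ρ)
    rw [div_le_iff₀ hρ0] at h1
    calc Real.log (2 * L * R ^ 2 / ε) ≤ (⌈Real.log (2 * L * R ^ 2 / ε) / ρ⌉₊ : ℝ) * ρ := h1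
    _ = ρ * N := by rw [hNdef]; ring
  have hexpN : Real.exp (-(ρ * N)) ≤ ε / (2 * L * R ^ 2) := by
    have h1 : Real.exp (-(ρ * N)) ≤ Real.exp (-(Real.log (2 * L * R ^ 2 / ε))) := by
      apply Real.exp_le_exp.mpr; linarith
    have h2 : Real.exp (-(Real.log (2 * L * R ^ 2 / ε))) = ε / (2 * L * R ^ 2) := by
      rw [Real.exp_neg, Real.exp_log hLR2, inv_div]
    linarith
  have hρ14 : ρ ≤ 1 / 4 := aux_rho14 α L μ ρ hα0 hβ0 hμ0 hL hρeq
  have hpowN : (1 - ρ) ^ N * (F x0 - F xbar) ≤ ε / 4 := by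
    have h1 : (1 - ρ) ^ N ≤ Real.exp (-(ρ * N)) := by
      calc (1 - ρ) ^ N ≤ (Real.exp (-ρ)) ^ N := by
            apply pow_le_pow_left₀ (by linarith)
            linarith [Real.add_one_le_exp (-ρ)]
      _ = Real.exp (-(ρ * N)) := by rw [← Real.exp_nat_mul]; congr 1; push_cast; ring
    have h2 : (1 - ρ) ^ N * (F x0 - F xbar) ≤ Real.exp (-(ρ * N)) * (F x0 - F xbar) :=
      mul_le_mul_of_nonneg_right h1 hV0nn
    have h3 : Real.exp (-(ρ * N)) * (F x0 - F xbar) ≤ (ε / (2 * L * R ^ 2)) * (L * R ^ 2 / 2) :=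
      mul_le_mul hexpN hV0le hV0nn (by positivity)
    have h4 : (ε / (2 * L * R ^ 2)) * (L * R ^ 2 / 2) = ε / 4 := by
      field_simp
      ring
    linarith
  have hfloor : Vinf + μ / 2 * R ^ 2 = ε / 2 := by
    rw [hVinfdef, hμdef]
    field_simp
    ring
  -- conclusion
  refine ⟨μ, st, hμ0, hst0, N, hNbound, ?_⟩
  intro x hx0 hrec
  have key : ∀ k : ℕ, F (x k) - F xbar ≤ (1 - ρ) ^ k * (F x0 - F xbar) + Vinf := by
    intro k
    induction k with
    | zero => rw [hx0, pow_zero, one_mul]; linarith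
    | succ k ih =>
      have h1 : F (x (k + 1)) - F xbar ≤ (1 - ρ) * (F (x k) - F xbar) + ρ * Vinf := by
        rw [hrec k]; exact STEP (x k)
      have h2 : (1 - ρ) * (F (x k) - F xbar)
          ≤ (1 - ρ) * ((1 - ρ) ^ k * (F x0 - F xbar) + Vinf) :=
        mul_le_mul_of_nonneg_left ih (by linarith)
      calc F (x (k + 1)) - F xbar
          ≤ (1 - ρ) * ((1 - ρ) ^ k * (F x0 - F xbar) + Vinf) + ρ * Vinf := by linarith
      _ = (1 - ρ) ^ (k + 1) * (F x0 - F xbar) + Vinf := by ring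
  have hVN := key N
  have hfF : f (x N) ≤ F (x N) := by
    simp only [hFdef]
    exact le_add_of_nonneg_right (mul_nonneg (by linarith) (by positivity))
  have hFxstar : F xstar = f xstar + μ / 2 * R ^ 2 := by
    simp only [hFdef]
    rw [norm_sub_rev, ← hR]
  have hFbarle : F xbar ≤ f xstar + μ / 2 * R ^ 2 := by
    rw [← hFxstar]; exact hxbar xstar
  linarith [hVN, hpowN, hfF, hFbarle, hfloor, hε0]
end

section
/- Let f : ℝ^n → ℝ be differentiable with gradient ∇f, L-smooth and μ-strongly convex with 0 < μ ≤ L; let δ ≥ 0 and let g̃ satisfy the absolute noise condition with parameter δ. Then for all x, y ∈ ℝ^n: (μ/4)·‖y − x‖² ≤ f(y) − (f(x) − δ²/μ) − ⟪g̃(x), y − x⟫ ≤ L·‖y − x‖² + 2δ²/μ; in other words, the pair (g̃(x), f(x) − δ²/μ) is a (2δ²/μ, 2L, μ/2) inexact oracle for f at every point x. -/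
open scoped InnerProductSpace

/-!
The noisy model `f x - δ²/μ + ⟪g̃ x, y - x⟫` differs from the exact linearization by
`δ²/μ - ⟪g̃ x - ∇f x, y - x⟫`, and Cauchy–Schwarz with AM–GM bounds the inner product by
`δ‖y - x‖ ≤ δ²/μ + (μ/4)‖y - x‖²`. The strong-convexity and smoothness gaps `(μ/2)‖y - x‖²` and
`(L/2)‖y - x‖²` absorb the quadratic term, which costs half of the curvature below and, since
`μ ≤ L`, at most doubles it above.
-/

def IsInexactOracle {E : Type*} [NormedAddCommGroup E] [InnerProductSpace ℝ E]
    (f : E → ℝ) (y g : E) (φ D L μ : ℝ) : Prop :=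
  ∀ x, μ / 2 * ‖x - y‖ ^ 2 ≤ f x - (φ + ⟪g, x - y⟫_ℝ) ∧
    f x - (φ + ⟪g, x - y⟫_ℝ) ≤ L / 2 * ‖x - y‖ ^ 2 + D

theorem mul_le_sq_div_add_mul_sq {μ : ℝ} (hμ : 0 < μ) (δ r : ℝ) :
    δ * r ≤ δ ^ 2 / μ + μ / 4 * r ^ 2 := by
  rw [div_add' _ _ _ hμ.ne', le_div_iff₀ hμ]
  nlinarith [sq_nonneg (2 * δ - μ * r)]

section InnerProductSpace

variable {E : Type*} [NormedAddCommGroup E] [InnerProductSpace ℝ E]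

theorem abs_inner_sub_inner_le_of_norm_sub_le {a b : E} {δ : ℝ} (h : ‖a - b‖ ≤ δ) (v : E) :
    |⟪a, v⟫_ℝ - ⟪b, v⟫_ℝ| ≤ δ * ‖v‖ :=
  calc |⟪a, v⟫_ℝ - ⟪b, v⟫_ℝ| = |⟪a - b, v⟫_ℝ| := by rw [inner_sub_left]
    _ ≤ ‖a - b‖ * ‖v‖ := abs_real_inner_le_norm _ _
    _ ≤ δ * ‖v‖ := mul_le_mul_of_nonneg_right h (norm_nonneg _)

theorem isInexactOracle_of_norm_sub_grad_le {f : E → ℝ} {f' g : E → E} {μ L δ : ℝ}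
    (hμ : 0 < μ) (hμL : μ ≤ L)
    (hsmooth : ∀ x y, f y ≤ f x + ⟪f' x, y - x⟫_ℝ + L / 2 * ‖y - x‖ ^ 2)
    (hsc : ∀ x y, f x + ⟪f' x, y - x⟫_ℝ + μ / 2 * ‖x - y‖ ^ 2 ≤ f y)
    (hnoise : ∀ x, ‖g x - f' x‖ ≤ δ) (x : E) :
    IsInexactOracle f x (g x) (f x - δ ^ 2 / μ) (2 * δ ^ 2 / μ) (2 * L) (μ / 2) := by
  intro y
  have hnoise_inner : |⟪g x, y - x⟫_ℝ - ⟪f' x, y - x⟫_ℝ| ≤ δ ^ 2 / μ + μ / 4 * ‖y - x‖ ^ 2 :=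
    (abs_inner_sub_inner_le_of_norm_sub_le (hnoise x) _).trans
      (mul_le_sq_div_add_mul_sq hμ _ _)
  obtain ⟨hnoise_lower, hnoise_upper⟩ := abs_le.mp hnoise_inner
  have hcurv : μ / 4 * ‖y - x‖ ^ 2 ≤ L / 2 * ‖y - x‖ ^ 2 := 
    mul_le_mul_of_nonneg_right (by linarith) (sq_nonneg _)
  have hsc_xy := hsc x y
  rw [norm_sub_rev] at hsc_xy
  constructor <;> linarith [hsmooth x y, mul_div_assoc 2 (δ ^ 2) μ]

end InnerProductSpace

theorem abs_noise_inexact_oracle_general {n : ℕ} (f : EuclideanSpace ℝ (Fin n) → ℝ)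
    (f' g : EuclideanSpace ℝ (Fin n) → EuclideanSpace ℝ (Fin n))
    (μ L : ℝ) (hμ : 0 < μ) (hμL : μ ≤ L)
    (hsmooth : ∀ x y : EuclideanSpace ℝ (Fin n),
      f y ≤ f x + ⟪f' x, y - x⟫_ℝ + L / 2 * ‖y - x‖ ^ 2)
    (hsc : ∀ x y : EuclideanSpace ℝ (Fin n),
      f x + ⟪f' x, y - x⟫_ℝ + μ / 2 * ‖x - y‖ ^ 2 ≤ f y)
    (δ : ℝ)
    (hnoise : ∀ x, ‖g x - f' x‖ ≤ δ) :
    ∀ x y : EuclideanSpace ℝ (Fin n),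
      (μ / 4) * ‖y - x‖ ^ 2 ≤ f y - (f x - δ ^ 2 / μ) - ⟪g x, y - x⟫_ℝ ∧
      f y - (f x - δ ^ 2 / μ) - ⟪g x, y - x⟫_ℝ ≤ L * ‖y - x‖ ^ 2 + 2 * δ ^ 2 / μ := by
  intro x y
  obtain ⟨hlower, hupper⟩ :=
    isInexactOracle_of_norm_sub_grad_le hμ hμL hsmooth hsc hnoise x y
  constructor <;> linarith

/-- A gradient estimate with absolute noise yields an inexact `(2δ²/μ, 2L, μ/2)` oracle:
the pair `(g̃ x, f x − δ²/μ)` satisfies the corresponding two-sided quadratic bounds. -/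
theorem abs_noise_inexact_oracle {n : ℕ} (f : EuclideanSpace ℝ (Fin n) → ℝ)
    (f' g : EuclideanSpace ℝ (Fin n) → EuclideanSpace ℝ (Fin n))
    (hgrad : ∀ x, HasGradientAt f (f' x) x)
    (μ L : ℝ) (hμ : 0 < μ) (hμL : μ ≤ L)
    (hsmooth : ∀ x y : EuclideanSpace ℝ (Fin n),
      f y ≤ f x + ⟪f' x, y - x⟫_ℝ + L / 2 * ‖y - x‖ ^ 2)
    (hsc : ∀ x y : EuclideanSpace ℝ (Fin n),
      f x + ⟪f' x, y - x⟫_ℝ + μ / 2 * ‖x - y‖ ^ 2 ≤ f y)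
    (δ : ℝ) (hδ : 0 ≤ δ)
    (hnoise : ∀ x, ‖g x - f' x‖ ≤ δ) :
    ∀ x y : EuclideanSpace ℝ (Fin n),
      (μ / 4) * ‖y - x‖ ^ 2 ≤ f y - (f x - δ ^ 2 / μ) - ⟪g x, y - x⟫_ℝ ∧
      f y - (f x - δ ^ 2 / μ) - ⟪g x, y - x⟫_ℝ ≤ L * ‖y - x‖ ^ 2 + 2 * δ ^ 2 / μ :=
  abs_noise_inexact_oracle_general f f' g μ L hμ hμL hsmooth hsc δ hnoise
end
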